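/- arXiv:1709.07254 — 8 statements merged into one kernel-verified Lean document; each statement's English description precedes it below -/
import Mathlib

section
/- For integers m,n ≥ 2 and 0 < r < (m-1)(n-1), let I_r = {(a,b,h) ∈ ℤ³ : 0 ≤ a ≤ m-1, 0 ≤ b ≤ n-1, h ≥ 0, r = (a+1)(b+1)-1-h} and δ_r(m,n) = min{a·n + b·m - h : (a,b,h) ∈ I_r}. Let I'_r ⊆ ℤ³ be the set of triples (a,b,h) with 0 ≤ a ≤ m-2, 0 ≤ b ≤ n-2, 0 ≤ h ≤ min(a,b), and r = (a+1)(b+1)-1-h. Then δ_r(m,n) = min{a·n + b·m - h : (a,b,h) ∈ I'_r}. -/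
/-!
Substituting `h = (a+1)(b+1) - 1 - r`, the objective becomes
`(m-1)(n-1) + r - (m-1-a)(n-1-b)`, which does not increase when `a` or `b` decreases, while
`h ≤ min a b` says exactly that no row or column of the `(a+1) × (b+1)` rectangle can be removed
with more than `r` cells left. So every rectangle inside `[0, m-2] × [0, n-2]` shrinks to a minimal
one of no larger value, and the triples with `a = m-1` or `b = n-1` have the largest possible value
`(m-1)(n-1) + r`, beaten by the corner `(m-2, n-2)`.
-/

/-- `δ_r(m,n)`: the minimum of `a*n + b*m - h` over the set
`I_r = {(a,b,h) : 0 ≤ a ≤ m-1, 0 ≤ b ≤ n-1, h ≥ 0, r = (a+1)(b+1)-1-h}`. -/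
noncomputable def delta (m n r : ℤ) : ℤ :=
  sInf {d : ℤ | ∃ a b h : ℤ, 0 ≤ a ∧ a ≤ m - 1 ∧ 0 ≤ b ∧ b ≤ n - 1 ∧ 0 ≤ h ∧
    r = (a + 1) * (b + 1) - 1 - h ∧ d = a * n + b * m - h}

theorem exists_minimal_rectangle_gt {r a b : ℤ} (hr : 0 ≤ r) (ha : 0 ≤ a) (hb : 0 ≤ b)
    (hab : r < (a + 1) * (b + 1)) :
    ∃ a' b', 0 ≤ a' ∧ a' ≤ a ∧ 0 ≤ b' ∧ b' ≤ b ∧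
      r < (a' + 1) * (b' + 1) ∧ a' * (b' + 1) ≤ r ∧ (a' + 1) * b' ≤ r := by
  set R := (Finset.Icc 0 a ×ˢ Finset.Icc 0 b).filter fun p : ℤ × ℤ => r < (p.1 + 1) * (p.2 + 1)
  obtain ⟨⟨a', b'⟩, hmem, hmin⟩ :=
    R.exists_min_image (fun p => p.1 + p.2) ⟨(a, b), by simp [R, ha, hb, hab]⟩
  simp only [R, Finset.mem_filter, Finset.mem_product, Finset.mem_Icc, and_imp,
    Prod.forall] at hmem hmin
  obtain ⟨⟨⟨ha0, ha1⟩, hb0, hb1⟩, hcov⟩ := hmem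
  refine ⟨a', b', ha0, ha1, hb0, hb1, hcov, ?_, ?_⟩
  · by_contra! hrow
    have := hmin (a' - 1) b' (by nlinarith) (by linarith) hb0 hb1 (by linarith)
    linarith
  · by_contra! hcol
    have := hmin a' (b' - 1) ha0 ha1 (by nlinarith) (by linarith) (by linarith)
    linarith

def deltaValues (m n r : ℤ) : Set ℤ :=
  {d : ℤ | ∃ a b h : ℤ, 0 ≤ a ∧ a ≤ m - 1 ∧ 0 ≤ b ∧ b ≤ n - 1 ∧ 0 ≤ h ∧
    r = (a + 1) * (b + 1) - 1 - h ∧ d = a * n + b * m - h}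

def restrictedDeltaValues (m n r : ℤ) : Set ℤ :=
  {d : ℤ | ∃ a b h : ℤ, 0 ≤ a ∧ a ≤ m - 2 ∧ 0 ≤ b ∧ b ≤ n - 2 ∧
        0 ≤ h ∧ h ≤ min a b ∧ r = (a + 1) * (b + 1) - 1 - h ∧ d = a * n + b * m - h}

theorem value_eq_sub_mul (m n r a b : ℤ) :
    a * n + b * m - ((a + 1) * (b + 1) - 1 - r) =
      (m - 1) * (n - 1) + r - (m - 1 - a) * (n - 1 - b) := by
  ring

theorem exists_mem_restrictedDeltaValues_le {m n r a b : ℤ} (hr : 0 ≤ r) (ha : 0 ≤ a)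
    (ha' : a ≤ m - 2) (hb : 0 ≤ b) (hb' : b ≤ n - 2) (hab : r < (a + 1) * (b + 1)) :
    ∃ d ∈ restrictedDeltaValues m n r, d ≤ (m - 1) * (n - 1) + r - (m - 1 - a) * (n - 1 - b) := by
  obtain ⟨a', b', ha0, ha1, hb0, hb1, hcov, hrow, hcol⟩ := exists_minimal_rectangle_gt hr ha hb hab
  refine ⟨_, ⟨a', b', (a' + 1) * (b' + 1) - 1 - r, ha0, by linarith, hb0, by linarith,
    by linarith, le_min (by linarith) (by linarith), by ring, rfl⟩, ?_⟩
  rw [value_eq_sub_mul]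
  have : (m - 1 - a) * (n - 1 - b) ≤ (m - 1 - a') * (n - 1 - b') :=
    mul_le_mul (by linarith) (by linarith) (by linarith) (by linarith)
  linarith

theorem exists_mem_restrictedDeltaValues_le_of_mem {m n r d : ℤ} (hm : 2 ≤ m) (hn : 2 ≤ n)
    (hr0 : 0 ≤ r) (hr1 : r < (m - 1) * (n - 1))
    (hd : d ∈ deltaValues m n r) :
    ∃ d' ∈ restrictedDeltaValues m n r, d' ≤ d := by
  obtain ⟨a, b, h, ha0, ha1, hb0, hb1, hh, hr, rfl⟩ := hd
  obtain rfl : h = (a + 1) * (b + 1) - 1 - r := by linarith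
  rw [value_eq_sub_mul]
  by_cases hin : a ≤ m - 2 ∧ b ≤ n - 2
  · exact exists_mem_restrictedDeltaValues_le hr0 ha0 hin.1 hb0 hin.2 (by linarith)
  · obtain ⟨d', hd', hle⟩ := exists_mem_restrictedDeltaValues_le (m := m) (n := n) hr0
      (by linarith) le_rfl (by linarith) le_rfl (by linarith)
    have hcorner : (m - 1 - a) * (n - 1 - b) = 0 := mul_eq_zero.mpr (by omega)
    exact ⟨d', hd', by linarith⟩

/-- The minimum defining `δ_r(m,n)` is already attained on the smaller set
`I'_r` of triples with `0 ≤ a ≤ m-2`, `0 ≤ b ≤ n-2` and `0 ≤ h ≤ min a b`. -/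
theorem delta_eq_min_over_restricted_set (m n r : ℤ) (hm : 2 ≤ m) (hn : 2 ≤ n)
    (hr0 : 0 < r) (hr1 : r < (m - 1) * (n - 1)) :
    delta m n r =
      sInf {d : ℤ | ∃ a b h : ℤ, 0 ≤ a ∧ a ≤ m - 2 ∧ 0 ≤ b ∧ b ≤ n - 2 ∧
        0 ≤ h ∧ h ≤ min a b ∧ r = (a + 1) * (b + 1) - 1 - h ∧ d = a * n + b * m - h} := by
  refine csInf_eq_csInf_of_forall_exists_le
    (fun d hd => exists_mem_restrictedDeltaValues_le_of_mem hm hn hr0.le hr1 hd) ?_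
  rintro d ⟨a, b, h, ha0, ha1, hb0, hb1, hh, -, hr, hd⟩
  exact ⟨d, ⟨a, b, h, ha0, by linarith, hb0, by linarith, hh, hr, hd⟩, le_rfl⟩
end

section
/- If (a,b,h) ∈ I_r attains the minimum defining δ_r(m,n), i.e. δ_r(m,n) = a·n + b·m - h, then (a,b) attains the maximum of (m-a'-1)(n-b'-1) over all pairs (a',b') with 0 ≤ a' ≤ m-1, 0 ≤ b' ≤ n-1 and (a'+1)(b'+1)-1-r ≥ 0. -/
lemma delta_objective_eq (m n r a b : ℤ) :
    a * n + b * m - ((a + 1) * (b + 1) - 1 - r) =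
      (m - 1) * (n - 1) + r - (m - a - 1) * (n - b - 1) := by
  ring

lemma complement_mul_le {m n a b : ℤ} (ha0 : 0 ≤ a) (ha1 : a ≤ m - 1) (hb0 : 0 ≤ b)
    (hb1 : b ≤ n - 1) : (m - a - 1) * (n - b - 1) ≤ (m - 1) * (n - 1) :=
  mul_le_mul (by linarith) (by linarith) (by linarith) (by linarith)

lemma delta_le {m n r a b h : ℤ} (ha0 : 0 ≤ a) (ha1 : a ≤ m - 1) (hb0 : 0 ≤ b)
    (hb1 : b ≤ n - 1) (hh : 0 ≤ h) (hrel : r = (a + 1) * (b + 1) - 1 - h) :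
    delta m n r ≤ a * n + b * m - h := by
  refine csInf_le ⟨r, ?_⟩ ⟨a, b, h, ha0, ha1, hb0, hb1, hh, hrel, rfl⟩
  rintro d ⟨a', b', h', ha'0, ha'1, hb'0, hb'1, -, rfl, rfl⟩
  have hobj := delta_objective_eq m n ((a' + 1) * (b' + 1) - 1 - h') a' b'
  linarith [complement_mul_le ha'0 ha'1 hb'0 hb'1]

theorem minimizer_maximizes_general (m n r a b h : ℤ) (hh : 0 ≤ h)
    (hrel : r = (a + 1) * (b + 1) - 1 - h)
    (hmin : delta m n r = a * n + b * m - h) :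
    (0 ≤ (a + 1) * (b + 1) - 1 - r) ∧
    ∀ a' b' : ℤ, 0 ≤ a' → a' ≤ m - 1 → 0 ≤ b' → b' ≤ n - 1 →
      0 ≤ (a' + 1) * (b' + 1) - 1 - r →
      (m - a' - 1) * (n - b' - 1) ≤ (m - a - 1) * (n - b - 1) := by
  refine ⟨by linarith, fun a' b' ha'0 ha'1 hb'0 hb'1 hh' => ?_⟩
  have hle := delta_le ha'0 ha'1 hb'0 hb'1 hh' (by ring : r = _)
  have hh_eq : h = (a + 1) * (b + 1) - 1 - r := by linarith
  rw [hmin, hh_eq, delta_objective_eq, delta_objective_eq] at hle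
  linarith

/-- If `(a,b,h) ∈ I_r` attains the minimum defining `δ_r(m,n)`, then `(a,b)` attains the
maximum of `(m-a'-1)(n-b'-1)` over pairs `(a',b')` with `0 ≤ a' ≤ m-1`, `0 ≤ b' ≤ n-1` and
`(a'+1)(b'+1)-1-r ≥ 0`. -/
theorem minimizer_maximizes (m n r a b h : ℤ) (hm : 2 ≤ m) (hn : 2 ≤ n)
    (hr0 : 0 < r) (hr1 : r < (m - 1) * (n - 1))
    (ha0 : 0 ≤ a) (ha1 : a ≤ m - 1) (hb0 : 0 ≤ b) (hb1 : b ≤ n - 1) (hh : 0 ≤ h)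
    (hrel : r = (a + 1) * (b + 1) - 1 - h)
    (hmin : delta m n r = a * n + b * m - h) :
    (0 ≤ (a + 1) * (b + 1) - 1 - r) ∧
    ∀ a' b' : ℤ, 0 ≤ a' → a' ≤ m - 1 → 0 ≤ b' → b' ≤ n - 1 →
      0 ≤ (a' + 1) * (b' + 1) - 1 - r →
      (m - a' - 1) * (n - b' - 1) ≤ (m - a - 1) * (n - b - 1) :=
  minimizer_maximizes_general m n r a b h hh hrel hmin
end

section
/- Let m ≥ 2, n ≥ 1, A be integers with A + 2 - m ≤ 0, and let α₁,…,αₙ be integers with A+2-m ≤ αᵢ ≤ A+1 for all i. Let p ∈ {0,…,n-1} and q ∈ {A+2-m,…,A+1} be the unique integers determined by Euclidean division so that the sequence β with β₁ = … = β_p = A+1, β_{p+1} = q, β_{p+2} = … = β_n = A+2-m satisfies Σβᵢ = Σαᵢ. Then Σᵢ max(αᵢ,0) ≤ Σᵢ max(βᵢ,0) and Σᵢ max(αᵢ-1,0) ≤ Σᵢ max(βᵢ-1,0). -/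
/-!
Write `L = A+2-m`, `U = A+1` and fix a threshold `c ≥ L` (`c = 0` or `c = 1`). Then
`Σ (αᵢ - c)⁺` is the largest value of `Σ_{i ∈ T} (αᵢ - c)` over index sets `T`, and every such
sum is at most `p (U - c)⁺ + (q - c)⁺`, which is `Σ (βᵢ - c)⁺` because `(L - c)⁺ = 0`.
If `#T ≤ p`, bound each term by `U - c`. If `#T > p`, bound the entries outside `T` below by `L`;
the sum condition then gives
`Σ_{i ∈ T} (αᵢ - c) ≤ p (U - c) + (q - c) + (#T - 1 - p)(L - c)`, and the last term is `≤ 0`.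
-/

open Finset

section Extremal

variable {ι : Type*} [Fintype ι] {α : ι → ℤ} {L U q c : ℤ} {p : ℕ}

theorem sum_sub_le_of_sum_eq_extremal (hLc : L ≤ c) (hlo : ∀ i, L ≤ α i)
    (hhi : ∀ i, α i ≤ U) (hS : ∑ i, α i = p * U + q + (Fintype.card ι - 1 - p) * L)
    (T : Finset ι) : ∑ i ∈ T, (α i - c) ≤ p * max (U - c) 0 + max (q - c) 0 := by
  classical
  rcases le_or_gt #T p with hTp | hpT
  · calc ∑ i ∈ T, (α i - c) ≤ ∑ _i ∈ T, max (U - c) 0 :=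
          sum_le_sum fun i _ => le_max_of_le_left (sub_le_sub_right (hhi i) c)
      _ = #T * max (U - c) 0 := by rw [sum_const, nsmul_eq_mul]
      _ ≤ p * max (U - c) 0 :=
          mul_le_mul_of_nonneg_right (by exact_mod_cast hTp) (le_max_right _ _)
      _ ≤ p * max (U - c) 0 + max (q - c) 0 := le_add_of_nonneg_right (le_max_right _ _)
  · have hcompl : (#Tᶜ : ℤ) * L ≤ ∑ i ∈ Tᶜ, α i := by
      simpa using card_nsmul_le_sum Tᶜ α L fun i _ => hlo i
    have hcard : (#Tᶜ : ℤ) = Fintype.card ι - #T := by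
      rw [card_compl, Nat.cast_sub (card_le_univ T)]
    have hslack : ((#T : ℤ) - 1 - p) * (L - c) ≤ 0 :=
      mul_nonpos_of_nonneg_of_nonpos (by omega) (by omega)
    have hsplit := sum_add_sum_compl T α
    have hUc : (p : ℤ) * (U - c) ≤ p * max (U - c) 0 :=
      mul_le_mul_of_nonneg_left (le_max_left _ _) p.cast_nonneg
    rw [hcard] at hcompl
    rw [sum_sub_distrib, sum_const, nsmul_eq_mul]
    linarith [le_max_left (q - c) 0]

theorem sum_max_sub_le_of_sum_eq_extremal (hLc : L ≤ c) (hlo : ∀ i, L ≤ α i)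
    (hhi : ∀ i, α i ≤ U) (hS : ∑ i, α i = p * U + q + (Fintype.card ι - 1 - p) * L) :
    ∑ i, max (α i - c) 0 ≤ p * max (U - c) 0 + max (q - c) 0 := by
  classical
  have hpos : ∑ i, max (α i - c) 0 = ∑ i ∈ univ.filter (fun i => c < α i), (α i - c) := by
    rw [sum_filter]
    refine sum_congr rfl fun i _ => ?_
    split_ifs <;> omega
  rw [hpos]
  exact sum_sub_le_of_sum_eq_extremal hLc hlo hhi hS _

end Extremal

theorem sum_comp_of_eq_ite_lt_ite_eq {n p : ℕ} (hpn : p < n) {U q L : ℤ} (β : Fin n → ℤ)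
    (hβ : ∀ i : Fin n, β i = if (i : ℕ) < p then U else if (i : ℕ) = p then q else L)
    (f : ℤ → ℤ) :
    ∑ i, f (β i) = p * f U + f q + ((n : ℤ) - 1 - p) * f L := by
  set g : ℕ → ℤ := fun k => f (if k < p then U else if k = p then q else L)
  have hlow : ∑ k ∈ range p, g k = p * f U := by
    rw [sum_eq_card_nsmul (b := f U) fun k hk => by simp [g, mem_range.mp hk], card_range,
      nsmul_eq_mul]
  have hhigh : ∑ k ∈ Ico (p + 1) n, g k = ((n : ℤ) - 1 - p) * f L := by
    rw [sum_eq_card_nsmul (b := f L) fun k hk => by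
      have := (mem_Ico.mp hk).1
      simp [g, show ¬k < p by omega, show k ≠ p by omega], Nat.card_Ico, nsmul_eq_mul]
    push_cast [show p + 1 ≤ n from hpn]
    ring
  calc ∑ i, f (β i) = ∑ i : Fin n, g i := sum_congr rfl fun i _ => by rw [hβ i]
    _ = ∑ k ∈ range (p + 1), g k + ∑ k ∈ Ico (p + 1) n, g k := by
        rw [Fin.sum_univ_eq_sum_range g, sum_range_add_sum_Ico _ hpn]
    _ = p * f U + f q + ((n : ℤ) - 1 - p) * f L := by
        rw [sum_range_succ, hlow, hhigh]
        simp [g]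

theorem sum_max_sub_le_of_extremal {n p : ℕ} (hpn : p < n) {L U q c : ℤ} (hLc : L ≤ c)
    (α : Fin n → ℤ) (hlo : ∀ i, L ≤ α i) (hhi : ∀ i, α i ≤ U) (β : Fin n → ℤ)
    (hβ : ∀ i : Fin n, β i = if (i : ℕ) < p then U else if (i : ℕ) = p then q else L)
    (hsum : ∑ i, β i = ∑ i, α i) :
    ∑ i, max (α i - c) 0 ≤ ∑ i, max (β i - c) 0 := by
  have hS : ∑ i, α i = p * U + q + (Fintype.card (Fin n) - 1 - p) * L := by
    rw [← hsum, Fintype.card_fin]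
    exact sum_comp_of_eq_ite_lt_ite_eq hpn β hβ id
  rw [sum_comp_of_eq_ite_lt_ite_eq hpn β hβ fun x => max (x - c) 0,
    max_eq_right (by omega : L - c ≤ 0)]
  simpa using sum_max_sub_le_of_sum_eq_extremal hLc hlo hhi hS

theorem worst_case_general (m n : ℕ) (A : ℤ) (hn : 1 ≤ n)
    (hAm : A + 2 - (m : ℤ) ≤ 0)
    (α : Fin n → ℤ) (hlo : ∀ i, A + 2 - (m : ℤ) ≤ α i) (hhi : ∀ i, α i ≤ A + 1)
    (p : ℕ) (hp : p ≤ n - 1) (q : ℤ)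
    (β : Fin n → ℤ)
    (hβ : ∀ i : Fin n, β i =
      if (i : ℕ) < p then A + 1 else if (i : ℕ) = p then q else A + 2 - (m : ℤ))
    (hsum : ∑ i, β i = ∑ i, α i) :
    (∑ i, max (α i) 0 ≤ ∑ i, max (β i) 0) ∧
    (∑ i, max (α i - 1) 0 ≤ ∑ i, max (β i - 1) 0) := by
  have hpn : p < n := by omega
  constructor
  · simpa using sum_max_sub_le_of_extremal hpn hAm α hlo hhi β hβ hsum (c := 0)
  · exact sum_max_sub_le_of_extremal hpn (by omega) α hlo hhi β hβ hsum

/-- The worst-case sequence lemma: if `β` is the sequence with `p` entries `A+1`, one entry `q`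
and the remaining entries `A+2-m`, having the same sum as `α`, then
`Σ αᵢ⁺ ≤ Σ βᵢ⁺` and `Σ (αᵢ-1)⁺ ≤ Σ (βᵢ-1)⁺`. -/
theorem worst_case (m n : ℕ) (A : ℤ) (hm : 2 ≤ m) (hn : 1 ≤ n)
    (hAm : A + 2 - (m : ℤ) ≤ 0)
    (α : Fin n → ℤ) (hlo : ∀ i, A + 2 - (m : ℤ) ≤ α i) (hhi : ∀ i, α i ≤ A + 1)
    (p : ℕ) (hp : p ≤ n - 1) (q : ℤ) (hq1 : A + 2 - (m : ℤ) ≤ q) (hq2 : q ≤ A + 1)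
    (β : Fin n → ℤ)
    (hβ : ∀ i : Fin n, β i =
      if (i : ℕ) < p then A + 1 else if (i : ℕ) = p then q else A + 2 - (m : ℤ))
    (hsum : ∑ i, β i = ∑ i, α i) :
    (∑ i, max (α i) 0 ≤ ∑ i, max (β i) 0) ∧
    (∑ i, max (α i - 1) 0 ≤ ∑ i, max (β i - 1) 0) :=
  worst_case_general m n A hn hAm α hlo hhi p hp q β hβ hsum
end

section
/- Let m,n ≥ 2 and a,b,h,A,B,p ≥ 0 and q be integers with a ≤ m-1, b ≤ n-1, B ≤ n-1, r := (a+1)(b+1)-1-h, 0 < r < (m-1)(n-1), and suppose (a,b) maximizes (m-a'-1)(n-b'-1) over pairs (a',b') with 0 ≤ a' ≤ m-1, 0 ≤ b' ≤ n-1, (a'+1)(b'+1)-1-r ≥ 0. Assume A+2-m ≤ 0, q > 0, B < p, A+2-m ≤ q ≤ A, and p(m-1) + (q - (A+2-m)) = an + bm - h + m - An - B - 2. Then t₂ := Ap + q + B satisfies t₂ ≤ r. -/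
/-!
Substituting the linear relation `heq` turns `r - t₂` into the difference
`(m - a - 1)(n - b - 1) - (m - A - 1)(n - p - 1)` of two complementary rectangles. If `p ≥ n - 1`
the second rectangle is degenerate (nonpositive area). Otherwise either `(A, p)` is a competitor
in the maximisation defining `(a, b)`, so its complementary rectangle is not larger, or it is not,
which means `r` exceeds `(A + 1)(p + 1) - 1 > Ap + q + B` outright.
-/

section

variable {R : Type*} [CommRing R]

theorem sub_eq_complRect_sub_complRect {m n a b h A B p q : R}
    (heq : p * (m - 1) + (q - (A + 2 - m)) = a * n + b * m - h + m - A * n - B - 2) :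
    (a + 1) * (b + 1) - 1 - h - (A * p + q + B)
      = (m - a - 1) * (n - b - 1) - (m - A - 1) * (n - p - 1) := by
  linear_combination -heq

variable [LinearOrder R] [IsStrictOrderedRing R]

theorem mul_add_add_lt_of_le_of_lt {A B p q : R} (hq : q ≤ A) (hB : B < p) :
    A * p + q + B < (A + 1) * (p + 1) - 1 := by
  linear_combination hq + hB

end

theorem case_one_general (m n a b h A B p q : ℤ)
    (hA : 0 ≤ A) (hp0 : 0 ≤ p)
    (ha1 : a ≤ m - 1) (hb1 : b ≤ n - 1)
    (hmax : ∀ a' b' : ℤ, 0 ≤ a' → a' ≤ m - 1 → 0 ≤ b' → b' ≤ n - 1 →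
      0 ≤ (a' + 1) * (b' + 1) - 1 - ((a + 1) * (b + 1) - 1 - h) →
      (m - a' - 1) * (n - b' - 1) ≤ (m - a - 1) * (n - b - 1))
    (hAm : A + 2 - m ≤ 0) (hBp : B < p)
    (hq2 : q ≤ A)
    (heq : p * (m - 1) + (q - (A + 2 - m)) = a * n + b * m - h + m - A * n - B - 2) :
    A * p + q + B ≤ (a + 1) * (b + 1) - 1 - h := by
  have hdiff := sub_eq_complRect_sub_complRect heq
  rcases le_or_gt (n - p - 1) 0 with hpn | hpn
  · have hdegenerate : (m - A - 1) * (n - p - 1) ≤ 0 :=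
      mul_nonpos_of_nonneg_of_nonpos (by linarith) hpn
    have hrect : 0 ≤ (m - a - 1) * (n - b - 1) := mul_nonneg (by linarith) (by linarith)
    linarith
  · by_cases hcompetitor : 0 ≤ (A + 1) * (p + 1) - 1 - ((a + 1) * (b + 1) - 1 - h)
    · linarith [hmax A p hA (by linarith) hp0 (by linarith) hcompetitor]
    · linarith [mul_add_add_lt_of_le_of_lt hq2 hBp]

/-- Case (1) of the key combinatorial claim: if `q > 0` and `B < p`, then
`t₂ = Ap + q + B ≤ r = (a+1)(b+1)-1-h`. -/
theorem case_one (m n a b h A B p q : ℤ) (hm : 2 ≤ m) (hn : 2 ≤ n)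
    (ha0 : 0 ≤ a) (hb0 : 0 ≤ b) (hh : 0 ≤ h) (hA : 0 ≤ A) (hB0 : 0 ≤ B) (hp0 : 0 ≤ p)
    (ha1 : a ≤ m - 1) (hb1 : b ≤ n - 1) (hB1 : B ≤ n - 1)
    (hr0 : 0 < (a + 1) * (b + 1) - 1 - h)
    (hr1 : (a + 1) * (b + 1) - 1 - h < (m - 1) * (n - 1))
    (hmax : ∀ a' b' : ℤ, 0 ≤ a' → a' ≤ m - 1 → 0 ≤ b' → b' ≤ n - 1 →
      0 ≤ (a' + 1) * (b' + 1) - 1 - ((a + 1) * (b + 1) - 1 - h) →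
      (m - a' - 1) * (n - b' - 1) ≤ (m - a - 1) * (n - b - 1))
    (hAm : A + 2 - m ≤ 0) (hq0 : 0 < q) (hBp : B < p)
    (hq1 : A + 2 - m ≤ q) (hq2 : q ≤ A)
    (heq : p * (m - 1) + (q - (A + 2 - m)) = a * n + b * m - h + m - A * n - B - 2) :
    A * p + q + B ≤ (a + 1) * (b + 1) - 1 - h :=
  case_one_general m n a b h A B p q hA hp0 ha1 hb1 hmax hAm hBp hq2 heq
end

section
/- Let m,n ≥ 2 and a,b,h,A,B,p ≥ 0 and q be integers with a ≤ m-1, b ≤ n-1, B ≤ n-1, r := (a+1)(b+1)-1-h, 0 < r < (m-1)(n-1), and suppose (a,b) maximizes (m-a'-1)(n-b'-1) over pairs (a',b') with 0 ≤ a' ≤ m-1, 0 ≤ b' ≤ n-1, (a'+1)(b'+1)-1-r ≥ 0. Assume A+2-m ≤ 0, q > 0, B ≥ p, A+2-m ≤ q ≤ A, and p(m-1) + (q - (A+2-m)) = an + bm - h + m - An - B - 2. Then t₁ := (A+1)p + q satisfies t₁ ≤ r. -/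
/-!
Either `r ≤ (A+1)(p+1) - 1`, in which case `(A, p)` is admissible in the maximization defining
`(a, b)`, so `(m-A-1)(n-p-1) ≤ (m-a-1)(n-b-1)`, and the balance equation rewrites `r - t₁` as
`(m-a-1)(n-b-1) - (m-A-1)(n-p-1) + B - p ≥ 0`; or `r ≥ (A+1)p + A + 1`, which exceeds
`t₁ = (A+1)p + q` because `q ≤ A`.
-/

theorem rank_sub_weight_eq_of_balance (m n a b h A B p q : ℤ)
    (heq : p * (m - 1) + (q - (A + 2 - m)) = a * n + b * m - h + m - A * n - B - 2) :
    (a + 1) * (b + 1) - 1 - h - ((A + 1) * p + q) =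
      (m - a - 1) * (n - b - 1) - (m - A - 1) * (n - p - 1) + B - p := by
  linear_combination -heq

theorem case_two_general (m n a b h A B p q : ℤ)
    (hA : 0 ≤ A) (hp0 : 0 ≤ p)
    (hB1 : B ≤ n - 1)
    (hmax : ∀ a' b' : ℤ, 0 ≤ a' → a' ≤ m - 1 → 0 ≤ b' → b' ≤ n - 1 →
      0 ≤ (a' + 1) * (b' + 1) - 1 - ((a + 1) * (b + 1) - 1 - h) →
      (m - a' - 1) * (n - b' - 1) ≤ (m - a - 1) * (n - b - 1))
    (hAm : A + 2 - m ≤ 0) (hBp : p ≤ B)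
    (hq2 : q ≤ A)
    (heq : p * (m - 1) + (q - (A + 2 - m)) = a * n + b * m - h + m - A * n - B - 2) :
    (A + 1) * p + q ≤ (a + 1) * (b + 1) - 1 - h := by
  rcases le_or_gt ((a + 1) * (b + 1) - 1 - h) ((A + 1) * (p + 1) - 1) with hle | hgt
  · have hprod := hmax A p hA (by linarith) hp0 (by linarith) (by linarith)
    linarith [rank_sub_weight_eq_of_balance m n a b h A B p q heq]
  · linarith

/-- Case (2) of the key combinatorial claim: if `q > 0` and `B ≥ p`, then
`t₁ = (A+1)p + q ≤ r = (a+1)(b+1)-1-h`. -/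
theorem case_two (m n a b h A B p q : ℤ) (hm : 2 ≤ m) (hn : 2 ≤ n)
    (ha0 : 0 ≤ a) (hb0 : 0 ≤ b) (hh : 0 ≤ h) (hA : 0 ≤ A) (hB0 : 0 ≤ B) (hp0 : 0 ≤ p)
    (ha1 : a ≤ m - 1) (hb1 : b ≤ n - 1) (hB1 : B ≤ n - 1)
    (hr0 : 0 < (a + 1) * (b + 1) - 1 - h)
    (hr1 : (a + 1) * (b + 1) - 1 - h < (m - 1) * (n - 1))
    (hmax : ∀ a' b' : ℤ, 0 ≤ a' → a' ≤ m - 1 → 0 ≤ b' → b' ≤ n - 1 →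
      0 ≤ (a' + 1) * (b' + 1) - 1 - ((a + 1) * (b + 1) - 1 - h) →
      (m - a' - 1) * (n - b' - 1) ≤ (m - a - 1) * (n - b - 1))
    (hAm : A + 2 - m ≤ 0) (hq0 : 0 < q) (hBp : p ≤ B)
    (hq1 : A + 2 - m ≤ q) (hq2 : q ≤ A)
    (heq : p * (m - 1) + (q - (A + 2 - m)) = a * n + b * m - h + m - A * n - B - 2) :
    (A + 1) * p + q ≤ (a + 1) * (b + 1) - 1 - h :=
  case_two_general m n a b h A B p q hA hp0 hB1 hmax hAm hBp hq2 heq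
end

section
/- Let Γ be a compact metric graph with a vertex set V(Γ) containing all points of valence ≠ 2, let v ∈ V(Γ), and let D be a divisor on Γ. Then D is v-reduced if and only if: (1) D is nonnegative on Γ∖{v}; (2) for every edge e, the total coefficient of D on the open interior of e is at most 1; and (3) there is a total order ≺ on V(Γ) with minimum v such that for every vertex u ≠ v, D(u) plus the sum of interior coefficients of D on edges joining u to earlier vertices is strictly less than the number of edges joining u to earlier vertices. -/
attribute [local instance] Classical.propDecidable

/-- A combinatorial model of a compact metric graph: a finite multigraph with
positive edge lengths. -/
structure MGraph where
  V : Type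
  E : Type
  [instV : Fintype V]
  [instE : Fintype E]
  [instDV : DecidableEq V]
  [instDE : DecidableEq E]
  src : E → V
  tgt : E → V
  len : E → ℝ
  len_pos : ∀ e, 0 < len e

attribute [instance] MGraph.instV MGraph.instE MGraph.instDV MGraph.instDE

/-- The points of the metric graph: vertices and interior points of edges
(an interior point of the edge `e` is a parameter `t` with `0 < t < len e`). -/
inductive MPoint (G : MGraph) where
  | vert : G.V → MPoint G
  | inner : (e : G.E) → Set.Ioo (0 : ℝ) (G.len e) → MPoint G

/-- A divisor on a metric graph: a finitely supported `ℤ`-valued function on points. -/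
abbrev MDiv (G : MGraph) := MPoint G →₀ ℤ

/-- The degree of a divisor. -/
def MDiv.deg {G : MGraph} (D : MDiv G) : ℤ := D.sum fun _ c => c

/-- A divisor is effective if all its coefficients are nonnegative. -/
def MDiv.Effective {G : MGraph} (D : MDiv G) : Prop := ∀ p, 0 ≤ D p

/-- The function induced on the parametrizing interval `[0, len e]` of an edge by a
function on the points of the graph. -/
noncomputable def edgeFun {G : MGraph} (f : MPoint G → ℝ) (e : G.E) (t : ℝ) : ℝ :=
  if h : 0 < t ∧ t < G.len e then f (MPoint.inner e ⟨t, h⟩)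
  else if t ≤ 0 then f (MPoint.vert (G.src e)) else f (MPoint.vert (G.tgt e))

/-- `g` is piecewise linear with integer slopes on `[0, L]`. -/
def IsPLInt (g : ℝ → ℝ) (L : ℝ) : Prop :=
  ∃ (k : ℕ) (t : Fin (k + 1) → ℝ), StrictMono t ∧ t 0 = 0 ∧ t (Fin.last k) = L ∧
    ∀ i : Fin k, ∃ s : ℤ, ∀ x ∈ Set.Icc (t i.castSucc) (t i.succ),
      g x = g (t i.castSucc) + s * (x - t i.castSucc)

/-- A rational function on the metric graph: piecewise linear with integer slopes on
every edge. -/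
def IsRational {G : MGraph} (f : MPoint G → ℝ) : Prop :=
  ∀ e : G.E, IsPLInt (edgeFun f e) (G.len e)

/-- The outgoing slope of `g` at `t` in the increasing direction. -/
noncomputable def slopeR (g : ℝ → ℝ) (t : ℝ) : ℤ :=
  if h : ∃ s : ℤ, ∃ ε : ℝ, 0 < ε ∧ ∀ x ∈ Set.Ioo t (t + ε), g x = g t + s * (x - t)
  then h.choose else 0

/-- The outgoing slope of `g` at `t` in the decreasing direction. -/
noncomputable def slopeL (g : ℝ → ℝ) (t : ℝ) : ℤ :=
  if h : ∃ s : ℤ, ∃ ε : ℝ, 0 < ε ∧ ∀ x ∈ Set.Ioo (t - ε) t, g x = g t + s * (t - x)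
  then h.choose else 0

/-- The order of a rational function at a point: the sum of its outgoing slopes. -/
noncomputable def ordAt {G : MGraph} (f : MPoint G → ℝ) : MPoint G → ℤ
  | .vert v => ∑ e : G.E,
      ((if G.src e = v then slopeR (edgeFun f e) 0 else 0) +
       (if G.tgt e = v then slopeL (edgeFun f e) (G.len e) else 0))
  | .inner e t => slopeR (edgeFun f e) t.1 + slopeL (edgeFun f e) t.1

/-- Linear equivalence of divisors: the difference is the divisor of a rational function. -/
def LinEquiv {G : MGraph} (D D' : MDiv G) : Prop :=
  ∃ f : MPoint G → ℝ, IsRational f ∧ ∀ p, D p - D' p = ordAt f p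

/-- `rankGe D r`: for every effective divisor `E` of degree `r` there is an effective
divisor linearly equivalent to `D - E`. -/
def rankGe {G : MGraph} (D : MDiv G) (r : ℤ) : Prop :=
  ∀ E : MDiv G, E.Effective → E.deg = r → ∃ D' : MDiv G, D'.Effective ∧ LinEquiv (D - E) D'

/-- The (Baker–Norine) rank of a divisor on a metric graph. -/
noncomputable def divRank {G : MGraph} (D : MDiv G) : ℤ := sSup {r : ℤ | rankGe D r}

/-- The complete bipartite metric graph `K_{m,n}` with all edge lengths `1`. -/
def Kgraph (m n : ℕ) : MGraph where
  V := Fin m ⊕ Fin n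
  E := Fin m × Fin n
  instV := inferInstance
  instE := inferInstance
  instDV := inferInstance
  instDE := inferInstance
  src e := Sum.inl e.1
  tgt e := Sum.inr e.2
  len _ := 1
  len_pos _ := one_pos

/-- The topology on the points of a metric graph: the quotient topology induced by the
parametrizations of the edges (together with the inclusion of the vertices). -/
noncomputable instance MPoint.topologicalSpace (G : MGraph) : TopologicalSpace (MPoint G) :=
  letI : TopologicalSpace G.V := ⊥
  TopologicalSpace.coinduced
    (fun x : (Σ e : G.E, Set.Icc (0 : ℝ) (G.len e)) ⊕ G.V =>
      match x with
      | .inl ⟨e, t⟩ =>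
          if h : 0 < (t : ℝ) ∧ (t : ℝ) < G.len e then MPoint.inner e ⟨t, h⟩
          else if (t : ℝ) ≤ 0 then MPoint.vert (G.src e) else MPoint.vert (G.tgt e)
      | .inr v => MPoint.vert v) inferInstance

/-- The outgoing degree of a set `X` at a point `p`: the number of directions at `p` along
which a sufficiently short open initial segment is disjoint from `X` (for closed `X`, this
is the maximal number of internally disjoint segments in `Γ∖X` with an open end at `p`). -/
noncomputable def outdeg {G : MGraph} (X : Set (MPoint G)) : MPoint G → ℕ
  | .vert v => Set.ncard {d : G.E × Bool |
      if d.2 = false then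
        G.src d.1 = v ∧ ∃ ε : ℝ, 0 < ε ∧
          ∀ s : Set.Ioo (0 : ℝ) (G.len d.1), (s : ℝ) < ε → MPoint.inner d.1 s ∉ X
      else
        G.tgt d.1 = v ∧ ∃ ε : ℝ, 0 < ε ∧
          ∀ s : Set.Ioo (0 : ℝ) (G.len d.1), G.len d.1 - ε < (s : ℝ) → MPoint.inner d.1 s ∉ X}
  | .inner e t => Set.ncard {d : Bool |
      if d then
        ∃ ε : ℝ, 0 < ε ∧ ∀ s : Set.Ioo (0 : ℝ) (G.len e),
          (t : ℝ) < (s : ℝ) → (s : ℝ) < (t : ℝ) + ε → MPoint.inner e s ∉ X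
      else
        ∃ ε : ℝ, 0 < ε ∧ ∀ s : Set.Ioo (0 : ℝ) (G.len e),
          (t : ℝ) - ε < (s : ℝ) → (s : ℝ) < (t : ℝ) → MPoint.inner e s ∉ X}

/-- A divisor `D` is `v`-reduced if it is effective away from `v` and every nonempty closed
connected subset `X ⊆ Γ∖{v}` has a boundary point `p` with `D(p) < outdeg_X(p)`. -/
def VReduced {G : MGraph} (v : G.V) (D : MDiv G) : Prop :=
  (∀ p, p ≠ MPoint.vert v → 0 ≤ D p) ∧
  ∀ X : Set (MPoint G), X.Nonempty → IsClosed X → IsConnected X →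
    X ⊆ {MPoint.vert v}ᶜ → ∃ p ∈ frontier X, (D p : ℤ) < outdeg X p

/-- The total coefficient of a divisor on the open interior of an edge. -/
noncomputable def edgeSum {G : MGraph} (D : MDiv G) (e : G.E) : ℤ :=
  ∑ p ∈ D.support, if ∃ t, p = MPoint.inner e t then D p else 0

/-- The edges joining `u` to a vertex which is earlier in the order given by `ord`. -/
noncomputable def earlierEdges {G : MGraph} (ord : G.V → ℕ) (u : G.V) : Finset G.E :=
  Finset.univ.filter fun e =>
    (G.src e = u ∧ ord (G.tgt e) < ord u) ∨ (G.tgt e = u ∧ ord (G.src e) < ord u)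

/-- `D̃(u)`: the coefficient of `D` at `u` plus the interior coefficients of `D` on the
edges joining `u` to earlier vertices. -/
noncomputable def Dtilde {G : MGraph} (D : MDiv G) (ord : G.V → ℕ) (u : G.V) : ℤ :=
  D (MPoint.vert u) + ∑ e ∈ earlierEdges ord u, edgeSum D e

/-- `d̃(u)`: the number of edges joining `u` to earlier vertices. -/
noncomputable def dtilde {G : MGraph} (ord : G.V → ℕ) (u : G.V) : ℤ :=
  (earlierEdges (G := G) ord u).card

namespace MetricGraphAux

open Set

variable {G : MGraph}

/-- The parametrization map of an edge. -/
noncomputable def phi (G : MGraph) (e : G.E) (t : Set.Icc (0:ℝ) (G.len e)) : MPoint G :=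
  if h : 0 < (t : ℝ) ∧ (t : ℝ) < G.len e then MPoint.inner e ⟨t, h⟩
  else if (t : ℝ) ≤ 0 then MPoint.vert (G.src e) else MPoint.vert (G.tgt e)

lemma isOpen_iff_phi {U : Set (MPoint G)} : IsOpen U ↔ ∀ e, IsOpen (phi G e ⁻¹' U) := by
  letI : TopologicalSpace G.V := ⊥
  have h1 : IsOpen U ↔ IsOpen ((fun x : (Σ e : G.E, Set.Icc (0 : ℝ) (G.len e)) ⊕ G.V =>
      match x with
      | .inl ⟨e, t⟩ =>
          if h : 0 < (t : ℝ) ∧ (t : ℝ) < G.len e then MPoint.inner e ⟨t, h⟩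
          else if (t : ℝ) ≤ 0 then MPoint.vert (G.src e) else MPoint.vert (G.tgt e)
      | .inr v => MPoint.vert v) ⁻¹' U) := isOpen_coinduced
  rw [h1, isOpen_sum_iff, isOpen_sigma_iff]
  constructor
  · intro h e; exact h.1 e
  · intro h; exact ⟨h, trivial⟩

lemma continuous_phi (e : G.E) : Continuous (phi G e) := by
  rw [continuous_def]
  intro U hU
  exact isOpen_iff_phi.mp hU e

lemma isClosed_iff_phi {X : Set (MPoint G)} : IsClosed X ↔ ∀ e, IsClosed (phi G e ⁻¹' X) := by
  constructor
  · intro h e; exact h.preimage (continuous_phi e)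
  · intro h
    rw [← isOpen_compl_iff, isOpen_iff_phi]
    intro e
    rw [Set.preimage_compl, isOpen_compl_iff]
    exact h e

lemma phi_inner (e : G.E) (t : Set.Icc (0:ℝ) (G.len e)) (h : 0 < (t:ℝ) ∧ (t:ℝ) < G.len e) :
    phi G e t = MPoint.inner e ⟨t, h⟩ := dif_pos h

lemma phi_src (e : G.E) (t : Set.Icc (0:ℝ) (G.len e)) (h : (t:ℝ) = 0) :
    phi G e t = MPoint.vert (G.src e) := by
  rw [phi, dif_neg (by rw [h]; simp), if_pos (le_of_eq h)]

lemma phi_tgt (e : G.E) (t : Set.Icc (0:ℝ) (G.len e)) (h : (t:ℝ) = G.len e) :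
    phi G e t = MPoint.vert (G.tgt e) := by
  rw [phi, dif_neg (by rw [h]; simp), if_neg (by rw [h]; exact not_le.mpr (G.len_pos e))]

lemma inner_inj {e e' : G.E} {t : Set.Ioo (0:ℝ) (G.len e)} {t' : Set.Ioo (0:ℝ) (G.len e')}
    (h : MPoint.inner e t = MPoint.inner e' t') : e = e' ∧ (t : ℝ) = (t' : ℝ) := by
  cases h; exact ⟨rfl, rfl⟩

lemma exists_delta_of_open {U : Set (MPoint G)} (hU : IsOpen U) (e : G.E)
    (t : Set.Icc (0:ℝ) (G.len e)) (htU : phi G e t ∈ U) :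
    ∃ δ > 0, ∀ s : Set.Icc (0:ℝ) (G.len e), |(s:ℝ) - (t:ℝ)| < δ → phi G e s ∈ U := by
  have h := isOpen_iff_phi.mp hU e
  rw [isOpen_induced_iff] at h
  obtain ⟨V, hV, hVeq⟩ := h
  have htV : (t : ℝ) ∈ V := by
    have : t ∈ Subtype.val ⁻¹' V := by rw [hVeq]; exact htU
    exact this
  obtain ⟨δ, hδ, hball⟩ := Metric.isOpen_iff.mp hV _ htV
  refine ⟨δ, hδ, fun s hs => ?_⟩
  have : (s : ℝ) ∈ V := hball (by rwa [Metric.mem_ball, Real.dist_eq])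
  have : s ∈ Subtype.val ⁻¹' V := this
  rw [hVeq] at this; exact this

lemma mem_closure_right {S : Set (MPoint G)} (e : G.E) (t : ℝ) (ht : t ∈ Set.Icc (0:ℝ) (G.len e))
    (t' : ℝ) (htt' : t < t') (hlen : t < G.len e)
    (h : ∀ s (hs : s ∈ Set.Ioo (0:ℝ) (G.len e)), t < s → s < t' → MPoint.inner e ⟨s, hs⟩ ∈ S) :
    phi G e ⟨t, ht⟩ ∈ closure S := by
  rw [mem_closure_iff]
  intro U hU htU
  obtain ⟨δ, hδ, hball⟩ := exists_delta_of_open hU e ⟨t, ht⟩ htU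
  set m := min (min t' (G.len e)) (t + δ) with hm
  have htm : t < m := lt_min (lt_min htt' hlen) (by linarith)
  set s := (t + m) / 2 with hs
  have hts : t < s := by simp only [hs]; linarith
  have hsm : s < m := by simp only [hs]; linarith
  have hs0 : 0 < s := lt_of_le_of_lt ht.1 hts
  have hslen : s < G.len e := lt_of_lt_of_le hsm (le_trans (min_le_left _ _) (min_le_right _ _))
  have hst' : s < t' := lt_of_lt_of_le hsm (le_trans (min_le_left _ _) (min_le_left _ _))
  have hsIcc : s ∈ Set.Icc (0:ℝ) (G.len e) := ⟨le_of_lt hs0, le_of_lt hslen⟩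
  have hsd : |s - t| < δ := by
    rw [abs_of_pos (by linarith)]
    have : s < t + δ := lt_of_lt_of_le hsm (min_le_right _ _)
    linarith
  have hmem : phi G e ⟨s, hsIcc⟩ ∈ U := hball ⟨s, hsIcc⟩ hsd
  rw [phi_inner e ⟨s, hsIcc⟩ ⟨hs0, hslen⟩] at hmem
  exact ⟨_, hmem, h s ⟨hs0, hslen⟩ hts hst'⟩

lemma mem_closure_left {S : Set (MPoint G)} (e : G.E) (t : ℝ) (ht : t ∈ Set.Icc (0:ℝ) (G.len e))
    (t' : ℝ) (htt' : t' < t) (hpos : 0 < t)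
    (h : ∀ s (hs : s ∈ Set.Ioo (0:ℝ) (G.len e)), t' < s → s < t → MPoint.inner e ⟨s, hs⟩ ∈ S) :
    phi G e ⟨t, ht⟩ ∈ closure S := by
  rw [mem_closure_iff]
  intro U hU htU
  obtain ⟨δ, hδ, hball⟩ := exists_delta_of_open hU e ⟨t, ht⟩ htU
  set m := max (max t' 0) (t - δ) with hm
  have htm : m < t := max_lt (max_lt htt' hpos) (by linarith)
  set s := (t + m) / 2 with hs
  have hts : s < t := by simp only [hs]; linarith
  have hsm : m < s := by simp only [hs]; linarith
  have hs0 : 0 < s := lt_of_le_of_lt (le_trans (le_max_right _ _) (le_max_left _ _)) hsm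
  have hslen : s < G.len e := lt_of_lt_of_le hts ht.2
  have hst' : t' < s := lt_of_le_of_lt (le_trans (le_max_left _ _) (le_max_left _ _)) hsm
  have hsIcc : s ∈ Set.Icc (0:ℝ) (G.len e) := ⟨le_of_lt hs0, le_of_lt hslen⟩
  have hsd : |s - t| < δ := by
    rw [abs_of_neg (by linarith), neg_sub]
    have : t - δ < s := lt_of_le_of_lt (le_max_right _ _) hsm
    linarith
  have hmem : phi G e ⟨s, hsIcc⟩ ∈ U := hball ⟨s, hsIcc⟩ hsd
  rw [phi_inner e ⟨s, hsIcc⟩ ⟨hs0, hslen⟩] at hmem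
  exact ⟨_, hmem, h s ⟨hs0, hslen⟩ hst' hts⟩

lemma inner_ne_vert (e : G.E) (t : Set.Ioo (0:ℝ) (G.len e)) (u : G.V) :
    MPoint.inner e t ≠ MPoint.vert u := fun h => by cases h

variable {D : MDiv G}

/-- Effectivity on interior points. -/
def EffI (D : MDiv G) : Prop := ∀ (e : G.E) (t : Set.Ioo (0:ℝ) (G.len e)), 0 ≤ D (MPoint.inner e t)

lemma effI_of (v : G.V) (hEff : ∀ p, p ≠ MPoint.vert v → 0 ≤ D p) : EffI D :=
  fun e t => hEff _ (inner_ne_vert e t v)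

lemma edgeSum_term_nonneg (hE : EffI D) (e : G.E) (p : MPoint G) :
    0 ≤ if ∃ t, p = MPoint.inner e t then D p else 0 := by
  split_ifs with h
  · obtain ⟨t, rfl⟩ := h; exact hE e t
  · exact le_refl 0

lemma edgeSum_nonneg (hE : EffI D) (e : G.E) : 0 ≤ edgeSum D e :=
  Finset.sum_nonneg fun p _ => edgeSum_term_nonneg hE e p

lemma le_edgeSum (hE : EffI D) (e : G.E) (t : Set.Ioo (0:ℝ) (G.len e)) :
    D (MPoint.inner e t) ≤ edgeSum D e := by
  by_cases h : D (MPoint.inner e t) = 0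
  · rw [h]; exact edgeSum_nonneg hE e
  · have hmem : MPoint.inner e t ∈ D.support := Finsupp.mem_support_iff.mpr h
    have h2 := Finset.single_le_sum (f := fun p => if ∃ t', p = MPoint.inner e t' then D p else 0)
      (fun p _ => edgeSum_term_nonneg hE e p) hmem
    rw [if_pos ⟨t, rfl⟩] at h2
    exact h2

lemma chips_subsingleton (hE : EffI D) (e : G.E) (hle : edgeSum D e ≤ 1)
    {t t' : Set.Ioo (0:ℝ) (G.len e)} (h1 : 1 ≤ D (MPoint.inner e t))
    (h2 : 1 ≤ D (MPoint.inner e t')) : (t : ℝ) = (t' : ℝ) := by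
  by_contra hne
  have hpq : MPoint.inner e t ≠ MPoint.inner e t' := fun h => hne (inner_inj h).2
  have hp : MPoint.inner e t ∈ D.support := Finsupp.mem_support_iff.mpr (by omega)
  have hq : MPoint.inner e t' ∈ D.support := Finsupp.mem_support_iff.mpr (by omega)
  have hsub : ({MPoint.inner e t, MPoint.inner e t'} : Finset (MPoint G)) ⊆ D.support := by
    intro x hx
    rcases Finset.mem_insert.mp hx with rfl | hx
    · exact hp
    · rw [Finset.mem_singleton.mp hx]; exact hq
  have hbig : (2 : ℤ) ≤ edgeSum D e := by
    have hsum := Finset.sum_le_sum_of_subset_of_nonneg hsub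
      (fun p _ _ => edgeSum_term_nonneg hE e p)
    rw [Finset.sum_pair hpq, if_pos ⟨t, rfl⟩, if_pos ⟨t', rfl⟩] at hsum
    refine le_trans ?_ hsum
    omega
  omega

lemma exists_chip_of_pos (hE : EffI D) (e : G.E) (h1 : 1 ≤ edgeSum D e) :
    ∃ t, 1 ≤ D (MPoint.inner e t) := by
  by_contra h
  push_neg at h
  have : edgeSum D e = 0 := by
    apply Finset.sum_eq_zero
    intro p _
    split_ifs with hp
    · obtain ⟨t, rfl⟩ := hp
      have := hE e t
      have := h t
      omega
    · rfl
  omega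

lemma edgeSum_big (hE : EffI D) (e : G.E) (h2 : 2 ≤ edgeSum D e) :
    (∃ t, 2 ≤ D (MPoint.inner e t)) ∨
    ∃ t t' : Set.Ioo (0:ℝ) (G.len e), (t:ℝ) < (t':ℝ) ∧
      1 ≤ D (MPoint.inner e t) ∧ 1 ≤ D (MPoint.inner e t') := by
  by_cases hbig : ∃ t, 2 ≤ D (MPoint.inner e t)
  · exact Or.inl hbig
  push_neg at hbig
  right
  set Tset := D.support.filter (fun p => ∃ t, p = MPoint.inner e t) with hT
  have hsumT : edgeSum D e = ∑ p ∈ Tset, D p := (Finset.sum_filter _ _).symm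
  set P := Tset.filter (fun p => 1 ≤ D p) with hP
  by_cases hcard : 2 ≤ P.card
  · obtain ⟨p, hpP, q, hqP, hpq⟩ := Finset.one_lt_card.mp hcard
    have hpT : ∃ t, p = MPoint.inner e t := (Finset.mem_filter.mp (Finset.mem_filter.mp hpP).1).2
    have hqT : ∃ t, q = MPoint.inner e t := (Finset.mem_filter.mp (Finset.mem_filter.mp hqP).1).2
    obtain ⟨t, rfl⟩ := hpT
    obtain ⟨t', rfl⟩ := hqT
    have h1 : 1 ≤ D (MPoint.inner e t) := (Finset.mem_filter.mp hpP).2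
    have h2 : 1 ≤ D (MPoint.inner e t') := (Finset.mem_filter.mp hqP).2
    have hne : (t : ℝ) ≠ (t' : ℝ) := fun h => hpq (by cases t; cases t'; simp_all)
    rcases lt_or_gt_of_ne hne with hlt | hgt
    · exact ⟨t, t', hlt, h1, h2⟩
    · exact ⟨t', t, hgt, h2, h1⟩
  · exfalso
    have hsplit : ∑ p ∈ P, D p + ∑ p ∈ Tset.filter (fun p => ¬ 1 ≤ D p), D p
        = ∑ p ∈ Tset, D p := Finset.sum_filter_add_sum_filter_not _ _ _
    have hrest : ∑ p ∈ Tset.filter (fun p => ¬ 1 ≤ D p), D p = 0 := by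
      apply Finset.sum_eq_zero
      intro p hp
      have h1 := (Finset.mem_filter.mp hp).2
      have h2 : ∃ t, p = MPoint.inner e t :=
        (Finset.mem_filter.mp (Finset.mem_filter.mp hp).1).2
      obtain ⟨t, rfl⟩ := h2
      have := hE e t
      omega
    have hPle : ∑ p ∈ P, D p ≤ 1 := by
      calc ∑ p ∈ P, D p ≤ ∑ _p ∈ P, (1:ℤ) := by
            apply Finset.sum_le_sum
            intro p hp
            have h2 : ∃ t, p = MPoint.inner e t :=
              (Finset.mem_filter.mp (Finset.mem_filter.mp hp).1).2
            obtain ⟨t, rfl⟩ := h2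
            have := hbig t
            omega
        _ = P.card := by simp
        _ ≤ 1 := by exact_mod_cast Nat.lt_succ_iff.mp (by omega)
    omega

/-- The parameter trace of a set on an edge. -/
def trace (X : Set (MPoint G)) (e : G.E) : Set ℝ :=
  {s : ℝ | ∃ h : s ∈ Set.Icc (0:ℝ) (G.len e), phi G e ⟨s, h⟩ ∈ X}

lemma trace_subset_Icc (X : Set (MPoint G)) (e : G.E) :
    trace X e ⊆ Set.Icc (0:ℝ) (G.len e) := fun _ hs => hs.1

lemma phi_preimage_eq (X : Set (MPoint G)) (e : G.E) :
    phi G e ⁻¹' X = Subtype.val ⁻¹' trace X e := by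
  ext x
  simp only [Set.mem_preimage, trace, Set.mem_setOf_eq]
  constructor
  · intro h; exact ⟨x.2, by rwa [Subtype.coe_eta]⟩
  · rintro ⟨h, hx⟩; rwa [Subtype.coe_eta] at hx

lemma mem_trace_Ioo {X : Set (MPoint G)} {e : G.E} {s : ℝ} (hs : s ∈ Set.Ioo (0:ℝ) (G.len e)) :
    s ∈ trace X e ↔ MPoint.inner e ⟨s, hs⟩ ∈ X := by
  have hIcc : s ∈ Set.Icc (0:ℝ) (G.len e) := ⟨le_of_lt hs.1, le_of_lt hs.2⟩
  constructor
  · rintro ⟨h, hx⟩; rwa [phi_inner e ⟨s, h⟩ hs] at hx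
  · intro h; exact ⟨hIcc, by rwa [phi_inner e ⟨s, hIcc⟩ hs]⟩

lemma zero_mem_trace {X : Set (MPoint G)} {e : G.E} :
    (0:ℝ) ∈ trace X e ↔ MPoint.vert (G.src e) ∈ X := by
  have hIcc : (0:ℝ) ∈ Set.Icc (0:ℝ) (G.len e) := ⟨le_refl 0, le_of_lt (G.len_pos e)⟩
  constructor
  · rintro ⟨h, hx⟩; rwa [phi_src e ⟨0, h⟩ rfl] at hx
  · intro h; exact ⟨hIcc, by rwa [phi_src e ⟨0, hIcc⟩ rfl]⟩

lemma len_mem_trace {X : Set (MPoint G)} {e : G.E} :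
    G.len e ∈ trace X e ↔ MPoint.vert (G.tgt e) ∈ X := by
  have hIcc : G.len e ∈ Set.Icc (0:ℝ) (G.len e) := ⟨le_of_lt (G.len_pos e), le_refl _⟩
  constructor
  · rintro ⟨h, hx⟩; rwa [phi_tgt e ⟨_, h⟩ rfl] at hx
  · intro h; exact ⟨hIcc, by rwa [phi_tgt e ⟨_, hIcc⟩ rfl]⟩

lemma isClosed_iff_traces {X : Set (MPoint G)} :
    IsClosed X ↔ ∀ e, IsClosed (trace X e) := by
  constructor
  · intro h e
    have h1 : IsClosed (phi G e ⁻¹' X) := (isClosed_iff_phi.mp h) e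
    have h2 : trace X e = Subtype.val '' (phi G e ⁻¹' X) := by
      ext s
      simp only [Set.mem_image, Set.mem_preimage, trace, Set.mem_setOf_eq]
      constructor
      · rintro ⟨hIcc, hx⟩; exact ⟨⟨s, hIcc⟩, hx, rfl⟩
      · rintro ⟨x, hx, rfl⟩; exact ⟨x.2, by rwa [Subtype.coe_eta]⟩
    rw [h2]
    exact (isClosed_Icc (a := (0:ℝ)) (b := G.len e)).isClosedMap_subtype_val _ h1
  · intro h
    rw [isClosed_iff_phi]
    intro e
    rw [phi_preimage_eq]
    exact (h e).preimage continuous_subtype_val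

lemma outdeg_vert (X : Set (MPoint G)) (u : G.V) :
    outdeg X (MPoint.vert u) = Set.ncard {d : G.E × Bool |
      if d.2 = false then
        G.src d.1 = u ∧ ∃ ε : ℝ, 0 < ε ∧
          ∀ s : Set.Ioo (0 : ℝ) (G.len d.1), (s : ℝ) < ε → MPoint.inner d.1 s ∉ X
      else
        G.tgt d.1 = u ∧ ∃ ε : ℝ, 0 < ε ∧
          ∀ s : Set.Ioo (0 : ℝ) (G.len d.1), G.len d.1 - ε < (s : ℝ) → MPoint.inner d.1 s ∉ X} :=
  rfl

lemma outdeg_inner (X : Set (MPoint G)) (e : G.E) (t : Set.Ioo (0:ℝ) (G.len e)) :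
    outdeg X (MPoint.inner e t) = Set.ncard {d : Bool |
      if d then
        ∃ ε : ℝ, 0 < ε ∧ ∀ s : Set.Ioo (0 : ℝ) (G.len e),
          (t : ℝ) < (s : ℝ) → (s : ℝ) < (t : ℝ) + ε → MPoint.inner e s ∉ X
      else
        ∃ ε : ℝ, 0 < ε ∧ ∀ s : Set.Ioo (0 : ℝ) (G.len e),
          (t : ℝ) - ε < (s : ℝ) → (s : ℝ) < (t : ℝ) → MPoint.inner e s ∉ X} :=
  rfl

lemma frontier_subset_self {X : Set (MPoint G)} (h : IsClosed X) : frontier X ⊆ X :=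
  h.frontier_subset

lemma vreduced_edgeSum_le_one {v : G.V} {D : MDiv G} (hred : VReduced v D) (e : G.E) :
    edgeSum D e ≤ 1 := by
  by_contra hcon
  have h2 : 2 ≤ edgeSum D e := by omega
  have hE : EffI D := effI_of v hred.1
  -- extract two (possibly equal) chip points
  obtain ⟨t1, t2, hle, h1, h2', hcase⟩ :
      ∃ t1 t2 : Set.Ioo (0:ℝ) (G.len e), (t1:ℝ) ≤ (t2:ℝ) ∧ 1 ≤ D (MPoint.inner e t1) ∧
        1 ≤ D (MPoint.inner e t2) ∧ ((t1:ℝ) = (t2:ℝ) → 2 ≤ D (MPoint.inner e t1)) := by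
    rcases edgeSum_big hE e h2 with ⟨t, ht⟩ | ⟨t, t', hlt, ha, hb⟩
    · exact ⟨t, t, le_refl _, by omega, by omega, fun _ => ht⟩
    · exact ⟨t, t', le_of_lt hlt, ha, hb, fun h => absurd h (ne_of_lt hlt)⟩
  set ψ : ℝ → MPoint G := phi G e ∘ Set.projIcc 0 (G.len e) (le_of_lt (G.len_pos e)) with hψ
  set X : Set (MPoint G) := ψ '' Set.Icc (t1:ℝ) (t2:ℝ) with hXdef
  have hX : ∀ p, p ∈ X ↔ ∃ s : Set.Ioo (0:ℝ) (G.len e),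
      (t1:ℝ) ≤ (s:ℝ) ∧ (s:ℝ) ≤ (t2:ℝ) ∧ p = MPoint.inner e s := by
    intro p
    constructor
    · rintro ⟨s, hs, rfl⟩
      have hsIoo : s ∈ Set.Ioo (0:ℝ) (G.len e) :=
        ⟨lt_of_lt_of_le t1.2.1 hs.1, lt_of_le_of_lt hs.2 t2.2.2⟩
      have hsIcc : s ∈ Set.Icc (0:ℝ) (G.len e) := ⟨le_of_lt hsIoo.1, le_of_lt hsIoo.2⟩
      refine ⟨⟨s, hsIoo⟩, hs.1, hs.2, ?_⟩
      simp only [hψ, Function.comp_apply]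
      rw [Set.projIcc_of_mem _ hsIcc, phi_inner e ⟨s, hsIcc⟩ hsIoo]
    · rintro ⟨s, hs1, hs2, rfl⟩
      refine ⟨(s:ℝ), ⟨hs1, hs2⟩, ?_⟩
      have hsIcc : (s:ℝ) ∈ Set.Icc (0:ℝ) (G.len e) := ⟨le_of_lt s.2.1, le_of_lt s.2.2⟩
      simp only [hψ, Function.comp_apply]
      rw [Set.projIcc_of_mem _ hsIcc, phi_inner e ⟨s, hsIcc⟩ s.2]
  have hXin : MPoint.inner e t1 ∈ X := (hX _).mpr ⟨t1, le_refl _, hle, rfl⟩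
  have hXclosed : IsClosed X := by
    rw [isClosed_iff_traces]
    intro e'
    by_cases he : e' = e
    · subst he
      have : trace X e' = Set.Icc (t1:ℝ) (t2:ℝ) := by
        ext s
        constructor
        · rintro ⟨hIcc, hs⟩
          rcases eq_or_lt_of_le hIcc.1 with h0 | h0
          · rw [phi_src e' ⟨s, hIcc⟩ h0.symm] at hs
            obtain ⟨s', _, _, hs'⟩ := (hX _).mp hs
            exact absurd hs'.symm (inner_ne_vert _ _ _)
          rcases eq_or_lt_of_le hIcc.2 with hl | hl
          · rw [phi_tgt e' ⟨s, hIcc⟩ hl] at hs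
            obtain ⟨s', _, _, hs'⟩ := (hX _).mp hs
            exact absurd hs'.symm (inner_ne_vert _ _ _)
          · rw [phi_inner e' ⟨s, hIcc⟩ ⟨h0, hl⟩] at hs
            obtain ⟨s', ha, hb, hs'⟩ := (hX _).mp hs
            obtain ⟨-, rfl⟩ := inner_inj hs'
            exact ⟨ha, hb⟩
        · intro hs
          have hsIoo : s ∈ Set.Ioo (0:ℝ) (G.len e') :=
            ⟨lt_of_lt_of_le t1.2.1 hs.1, lt_of_le_of_lt hs.2 t2.2.2⟩
          rw [mem_trace_Ioo hsIoo]
          exact (hX _).mpr ⟨⟨s, hsIoo⟩, hs.1, hs.2, rfl⟩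
      rw [this]; exact isClosed_Icc
    · have : trace X e' = ∅ := by
        ext s
        simp only [Set.mem_empty_iff_false, iff_false]
        rintro ⟨hIcc, hs⟩
        obtain ⟨s', _, _, hs'⟩ := (hX _).mp hs
        rcases eq_or_lt_of_le hIcc.1 with h0 | h0
        · rw [phi_src e' ⟨s, hIcc⟩ h0.symm] at hs'
          exact inner_ne_vert _ _ _ hs'.symm
        rcases eq_or_lt_of_le hIcc.2 with hl | hl
        · rw [phi_tgt e' ⟨s, hIcc⟩ hl] at hs'
          exact inner_ne_vert _ _ _ hs'.symm
        · rw [phi_inner e' ⟨s, hIcc⟩ ⟨h0, hl⟩] at hs'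
          exact he (inner_inj hs').1
      rw [this]; exact isClosed_empty
  have hXconn : IsConnected X :=
    (isConnected_Icc hle).image ψ ((continuous_phi e).comp continuous_projIcc).continuousOn
  have hXavoid : X ⊆ {MPoint.vert v}ᶜ := by
    intro p hp
    obtain ⟨s, _, _, rfl⟩ := (hX _).mp hp
    simp only [Set.mem_compl_iff, Set.mem_singleton_iff]
    exact inner_ne_vert _ _ _
  obtain ⟨p, hpf, hplt⟩ := hred.2 X ⟨_, hXin⟩ hXclosed hXconn hXavoid
  have hpX : p ∈ X := frontier_subset_self hXclosed hpf
  obtain ⟨s, hs1, hs2, rfl⟩ := (hX _).mp hpX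
  -- blocked directions
  have hblockAbove : (s:ℝ) < (t2:ℝ) → ¬ (∃ ε : ℝ, 0 < ε ∧ ∀ s' : Set.Ioo (0 : ℝ) (G.len e),
      (s : ℝ) < (s' : ℝ) → (s' : ℝ) < (s : ℝ) + ε → MPoint.inner e s' ∉ X) := by
    rintro hst ⟨ε, hε, hfree⟩
    set s' := ((s:ℝ) + min ((s:ℝ)+ε) (t2:ℝ)) / 2 with hs'
    have hm : (s:ℝ) < min ((s:ℝ)+ε) (t2:ℝ) := lt_min (by linarith) hst
    have h1' : (s:ℝ) < s' := by simp only [hs']; linarith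
    have h2'' : s' < min ((s:ℝ)+ε) (t2:ℝ) := by simp only [hs']; linarith
    have hs'Ioo : s' ∈ Set.Ioo (0:ℝ) (G.len e) :=
      ⟨lt_trans s.2.1 h1', lt_of_lt_of_le (lt_of_lt_of_le h2'' (min_le_right _ _)) (le_of_lt t2.2.2)⟩
    refine hfree ⟨s', hs'Ioo⟩ h1' (lt_of_lt_of_le h2'' (min_le_left _ _)) ?_
    exact (hX _).mpr ⟨⟨s', hs'Ioo⟩, le_trans hs1 (le_of_lt h1'),
      le_of_lt (lt_of_lt_of_le h2'' (min_le_right _ _)), rfl⟩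
  have hblockBelow : (t1:ℝ) < (s:ℝ) → ¬ (∃ ε : ℝ, 0 < ε ∧ ∀ s' : Set.Ioo (0 : ℝ) (G.len e),
      (s : ℝ) - ε < (s' : ℝ) → (s' : ℝ) < (s : ℝ) → MPoint.inner e s' ∉ X) := by
    rintro hst ⟨ε, hε, hfree⟩
    set s' := ((s:ℝ) + max ((s:ℝ)-ε) (t1:ℝ)) / 2 with hs'
    have hm : max ((s:ℝ)-ε) (t1:ℝ) < (s:ℝ) := max_lt (by linarith) hst
    have h1' : s' < (s:ℝ) := by simp only [hs']; linarith
    have h2'' : max ((s:ℝ)-ε) (t1:ℝ) < s' := by simp only [hs']; linarith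
    have hs'Ioo : s' ∈ Set.Ioo (0:ℝ) (G.len e) :=
      ⟨lt_of_lt_of_le (lt_of_le_of_lt (le_of_lt t1.2.1) (lt_of_le_of_lt (le_max_right _ _) h2'')) (le_refl _),
       lt_trans h1' s.2.2⟩
    refine hfree ⟨s', hs'Ioo⟩ (lt_of_le_of_lt (le_max_left _ _) h2'') h1' ?_
    exact (hX _).mpr ⟨⟨s', hs'Ioo⟩, le_of_lt (lt_of_le_of_lt (le_max_right _ _) h2''),
      le_trans (le_of_lt h1') hs2, rfl⟩
  rw [outdeg_inner] at hplt
  rcases eq_or_lt_of_le hs1 with hq1 | hq1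
  · rcases eq_or_lt_of_le hs2 with hq2 | hq2
    · -- s = t1 = t2 : D p ≥ 2, outdeg ≤ 2
      have hDp : 2 ≤ D (MPoint.inner e s) := by
        have : t1 = s := Subtype.ext hq1
        subst this
        exact hcase (hq2 ▸ rfl)
      have hcard : Set.ncard {d : Bool |
          if d then
            ∃ ε : ℝ, 0 < ε ∧ ∀ s' : Set.Ioo (0 : ℝ) (G.len e),
              (s : ℝ) < (s' : ℝ) → (s' : ℝ) < (s : ℝ) + ε → MPoint.inner e s' ∉ X
          else
            ∃ ε : ℝ, 0 < ε ∧ ∀ s' : Set.Ioo (0 : ℝ) (G.len e),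
              (s : ℝ) - ε < (s' : ℝ) → (s' : ℝ) < (s : ℝ) → MPoint.inner e s' ∉ X} ≤ 2 := by
        have := Set.ncard_le_ncard (Set.subset_univ ({d : Bool |
          if d then
            ∃ ε : ℝ, 0 < ε ∧ ∀ s' : Set.Ioo (0 : ℝ) (G.len e),
              (s : ℝ) < (s' : ℝ) → (s' : ℝ) < (s : ℝ) + ε → MPoint.inner e s' ∉ X
          else
            ∃ ε : ℝ, 0 < ε ∧ ∀ s' : Set.Ioo (0 : ℝ) (G.len e),
              (s : ℝ) - ε < (s' : ℝ) → (s' : ℝ) < (s : ℝ) → MPoint.inner e s' ∉ X}))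
          Set.finite_univ
        simpa [Set.ncard_univ] using this
      omega
    · -- s = t1 < t2 : D p ≥ 1, outdeg ≤ 1
      have hDp : 1 ≤ D (MPoint.inner e s) := by
        have : t1 = s := Subtype.ext hq1
        subst this; exact h1
      have hsub : {d : Bool |
          if d then
            ∃ ε : ℝ, 0 < ε ∧ ∀ s' : Set.Ioo (0 : ℝ) (G.len e),
              (s : ℝ) < (s' : ℝ) → (s' : ℝ) < (s : ℝ) + ε → MPoint.inner e s' ∉ X
          else
            ∃ ε : ℝ, 0 < ε ∧ ∀ s' : Set.Ioo (0 : ℝ) (G.len e),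
              (s : ℝ) - ε < (s' : ℝ) → (s' : ℝ) < (s : ℝ) → MPoint.inner e s' ∉ X} ⊆ {false} := by
        intro d hd
        simp only [Set.mem_setOf_eq] at hd
        cases d
        · rfl
        · rw [if_pos rfl] at hd
          exact absurd hd (hblockAbove hq2)
      have hcard := le_trans (Set.ncard_le_ncard hsub (Set.finite_singleton _))
        (le_of_eq (Set.ncard_singleton _))
      omega
  · rcases eq_or_lt_of_le hs2 with hq2 | hq2
    · -- t1 < s = t2 : D p ≥ 1, outdeg ≤ 1
      have hDp : 1 ≤ D (MPoint.inner e s) := by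
        have : t2 = s := Subtype.ext hq2.symm
        subst this; exact h2'
      have hsub : {d : Bool |
          if d then
            ∃ ε : ℝ, 0 < ε ∧ ∀ s' : Set.Ioo (0 : ℝ) (G.len e),
              (s : ℝ) < (s' : ℝ) → (s' : ℝ) < (s : ℝ) + ε → MPoint.inner e s' ∉ X
          else
            ∃ ε : ℝ, 0 < ε ∧ ∀ s' : Set.Ioo (0 : ℝ) (G.len e),
              (s : ℝ) - ε < (s' : ℝ) → (s' : ℝ) < (s : ℝ) → MPoint.inner e s' ∉ X} ⊆ {true} := by
        intro d hd
        simp only [Set.mem_setOf_eq] at hd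
        cases d
        · rw [if_neg Bool.false_ne_true] at hd
          exact absurd hd (hblockBelow hq1)
        · rfl
      have hcard := le_trans (Set.ncard_le_ncard hsub (Set.finite_singleton _))
        (le_of_eq (Set.ncard_singleton _))
      omega
    · -- t1 < s < t2 : D p ≥ 0, outdeg = 0
      have hDp : 0 ≤ D (MPoint.inner e s) := hE e s
      have hsub : {d : Bool |
          if d then
            ∃ ε : ℝ, 0 < ε ∧ ∀ s' : Set.Ioo (0 : ℝ) (G.len e),
              (s : ℝ) < (s' : ℝ) → (s' : ℝ) < (s : ℝ) + ε → MPoint.inner e s' ∉ X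
          else
            ∃ ε : ℝ, 0 < ε ∧ ∀ s' : Set.Ioo (0 : ℝ) (G.len e),
              (s : ℝ) - ε < (s' : ℝ) → (s' : ℝ) < (s : ℝ) → MPoint.inner e s' ∉ X} ⊆ ∅ := by
        intro d hd
        simp only [Set.mem_setOf_eq] at hd
        cases d
        · rw [if_neg Bool.false_ne_true] at hd
          exact absurd hd (hblockBelow hq1)
        · rw [if_pos rfl] at hd
          exact absurd hd (hblockAbove hq2)
      have hcard := le_trans (Set.ncard_le_ncard hsub (Set.finite_empty))
        (le_of_eq (Set.ncard_empty _))
      omega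

/-- An edge carrying an interior chip. -/
def hasChip (D : MDiv G) (e : G.E) : Prop := ∃ t, 1 ≤ D (MPoint.inner e t)

lemma edgeSum_eq_zero (hE : EffI D) {e : G.E} (h : ¬ hasChip D e) : edgeSum D e = 0 := by
  have h1 := edgeSum_nonneg hE e
  by_contra hne
  exact h (exists_chip_of_pos hE e (by omega))

lemma edgeSum_eq_one (hE : EffI D) (hle : ∀ e, edgeSum D e ≤ 1) {e : G.E} (h : hasChip D e) :
    edgeSum D e = 1 := by
  obtain ⟨t, ht⟩ := h
  have := le_edgeSum hE e t
  have := hle e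
  omega

lemma sum_edgeSum (hE : EffI D) (hle : ∀ e, edgeSum D e ≤ 1) (F : Finset G.E) :
    ∑ e ∈ F, edgeSum D e = (F.filter (fun e => hasChip D e)).card := by
  calc ∑ e ∈ F, edgeSum D e = ∑ e ∈ F, (if hasChip D e then (1:ℤ) else 0) := by
        apply Finset.sum_congr rfl
        intro e _
        split_ifs with h
        · exact edgeSum_eq_one hE hle h
        · exact edgeSum_eq_zero hE h
    _ = (F.filter (fun e => hasChip D e)).card := by
        rw [← Finset.sum_filter]
        simp

lemma count_chipless (hE : EffI D) (hle : ∀ e, edgeSum D e ≤ 1) {u : G.V} {F : Finset G.E}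
    (h : D (MPoint.vert u) + ∑ e ∈ F, edgeSum D e < F.card) :
    D (MPoint.vert u) < (F.filter (fun e => ¬ hasChip D e)).card := by
  rw [sum_edgeSum hE hle] at h
  have hsplit := Finset.card_filter_add_card_filter_not
    (s := F) (p := fun e => hasChip D e)
  have h1 : ((F.filter (fun e => hasChip D e)).card : ℤ)
      + ((F.filter (fun e => ¬ hasChip D e)).card : ℤ) = (F.card : ℤ) := by
    exact_mod_cast congrArg (Nat.cast : ℕ → ℤ) hsplit
  omega

lemma frontier_outdeg_right {X : Set (MPoint G)} {e : G.E} {b : ℝ}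
    (hb : b ∈ Set.Ioo (0:ℝ) (G.len e)) (hbX : MPoint.inner e ⟨b, hb⟩ ∈ X)
    (habove : ∀ s (hs : s ∈ Set.Ioo (0:ℝ) (G.len e)), b < s → MPoint.inner e ⟨s, hs⟩ ∉ X) :
    MPoint.inner e ⟨b, hb⟩ ∈ frontier X ∧ 1 ≤ outdeg X (MPoint.inner e ⟨b, hb⟩) := by
  constructor
  · rw [frontier_eq_closure_inter_closure]
    refine ⟨subset_closure hbX, ?_⟩
    have hIcc : b ∈ Set.Icc (0:ℝ) (G.len e) := ⟨le_of_lt hb.1, le_of_lt hb.2⟩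
    have := mem_closure_right (S := Xᶜ) e b hIcc (G.len e) hb.2 hb.2
      (fun s hs h1 _ => habove s hs h1)
    rwa [phi_inner e ⟨b, hIcc⟩ hb] at this
  · rw [outdeg_inner]
    refine (Set.ncard_pos (Set.toFinite _)).mpr ⟨true, ?_⟩
    rw [Set.mem_setOf_eq, if_pos rfl]
    refine ⟨1, one_pos, fun s h1 _ => ?_⟩
    have := habove (s:ℝ) s.2 h1
    rwa [Subtype.coe_eta] at this

lemma frontier_outdeg_left {X : Set (MPoint G)} {e : G.E} {b : ℝ}
    (hb : b ∈ Set.Ioo (0:ℝ) (G.len e)) (hbX : MPoint.inner e ⟨b, hb⟩ ∈ X)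
    (hbelow : ∀ s (hs : s ∈ Set.Ioo (0:ℝ) (G.len e)), s < b → MPoint.inner e ⟨s, hs⟩ ∉ X) :
    MPoint.inner e ⟨b, hb⟩ ∈ frontier X ∧ 1 ≤ outdeg X (MPoint.inner e ⟨b, hb⟩) := by
  constructor
  · rw [frontier_eq_closure_inter_closure]
    refine ⟨subset_closure hbX, ?_⟩
    have hIcc : b ∈ Set.Icc (0:ℝ) (G.len e) := ⟨le_of_lt hb.1, le_of_lt hb.2⟩
    have := mem_closure_left (S := Xᶜ) e b hIcc 0 hb.1 hb.1
      (fun s hs _ h2 => hbelow s hs h2)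
    rwa [phi_inner e ⟨b, hIcc⟩ hb] at this
  · rw [outdeg_inner]
    refine (Set.ncard_pos (Set.toFinite _)).mpr ⟨false, ?_⟩
    rw [Set.mem_setOf_eq, if_neg Bool.false_ne_true]
    refine ⟨1, one_pos, fun s _ h2 => ?_⟩
    have := hbelow (s:ℝ) s.2 h2
    rwa [Subtype.coe_eta] at this

lemma backward_dir {v : G.V} {D : MDiv G}
    (hEff : ∀ p, p ≠ MPoint.vert v → 0 ≤ D p)
    (hle : ∀ e, edgeSum D e ≤ 1)
    (ord : G.V → ℕ)
    (hlt : ∀ u, u ≠ v → Dtilde D ord u < dtilde (G := G) ord u) :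
    VReduced v D := by
  have hE : EffI D := effI_of v hEff
  refine ⟨hEff, fun X hXne hXcl _ hXsub => ?_⟩
  by_cases hvert : ∃ u, MPoint.vert u ∈ X
  · -- X contains a vertex
    obtain ⟨u0, hu0⟩ := hvert
    set S := Finset.univ.filter (fun u => MPoint.vert u ∈ X) with hS
    have hSne : S.Nonempty := ⟨u0, Finset.mem_filter.mpr ⟨Finset.mem_univ _, hu0⟩⟩
    obtain ⟨u, huS, humin⟩ := Finset.exists_min_image S ord hSne
    have huX : MPoint.vert u ∈ X := (Finset.mem_filter.mp huS).2
    have huneq : MPoint.vert u ≠ MPoint.vert v :=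
      fun h => hXsub huX (by rw [h]; exact Set.mem_singleton _)
    have hunv : u ≠ v := fun h => huneq (by rw [h])
    have hnotX : ∀ w, ord w < ord u → MPoint.vert w ∉ X := fun w hw hwX =>
      absurd (humin w (Finset.mem_filter.mpr ⟨Finset.mem_univ _, hwX⟩)) (by omega)
    have hDt := hlt u hunv
    unfold Dtilde dtilde at hDt
    have hcount := count_chipless hE hle hDt
    set F := earlierEdges ord u with hF
    set Fc := F.filter (fun e => ¬ hasChip D e) with hFc
    have hFmem : ∀ e, e ∈ F ↔
        ((G.src e = u ∧ ord (G.tgt e) < ord u) ∨ (G.tgt e = u ∧ ord (G.src e) < ord u)) := by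
      intro e
      simp [hF, earlierEdges]
    by_cases hfree : ∀ e ∈ Fc,
        (G.src e = u → ∃ ε : ℝ, 0 < ε ∧
          ∀ s : Set.Ioo (0:ℝ) (G.len e), (s:ℝ) < ε → MPoint.inner e s ∉ X) ∧
        (G.tgt e = u → ∃ ε : ℝ, 0 < ε ∧
          ∀ s : Set.Ioo (0:ℝ) (G.len e), G.len e - ε < (s:ℝ) → MPoint.inner e s ∉ X)
    · -- all chipless earlier edges are free at u : u is a good boundary point
      have hDu : 0 ≤ D (MPoint.vert u) := hEff _ huneq
      have hFcpos : 0 < Fc.card := by omega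
      have hbound : Fc.card ≤ outdeg X (MPoint.vert u) := by
        rw [outdeg_vert]
        have himg : (fun e => (e, if G.tgt e = u then true else false)) '' ↑Fc ⊆
            {d : G.E × Bool |
              if d.2 = false then
                G.src d.1 = u ∧ ∃ ε : ℝ, 0 < ε ∧
                  ∀ s : Set.Ioo (0 : ℝ) (G.len d.1), (s : ℝ) < ε → MPoint.inner d.1 s ∉ X
              else
                G.tgt d.1 = u ∧ ∃ ε : ℝ, 0 < ε ∧
                  ∀ s : Set.Ioo (0 : ℝ) (G.len d.1), G.len d.1 - ε < (s : ℝ) →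
                    MPoint.inner d.1 s ∉ X} := by
          rintro d ⟨e, he, rfl⟩
          have heF : e ∈ F := (Finset.mem_filter.mp he).1
          rcases (hFmem e).mp heF with ⟨hsrc, htlt⟩ | ⟨htgt, hslt⟩
          · have htne : G.tgt e ≠ u := fun h => by rw [h] at htlt; omega
            have hb : (if G.tgt e = u then true else false) = false := if_neg htne
            simp only [Set.mem_setOf_eq, hb]
            split_ifs <;> first
              | exact ⟨hsrc, (hfree e he).1 hsrc⟩
              | simp_all
          · have hsne : G.src e ≠ u := fun h => by rw [h] at hslt; omega
            have hb : (if G.tgt e = u then true else false) = true := if_pos htgt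
            simp only [Set.mem_setOf_eq, hb]
            split_ifs <;> first
              | exact ⟨htgt, (hfree e he).2 htgt⟩
              | simp_all
        calc Fc.card = ((fun e => (e, if G.tgt e = u then true else false)) '' ↑Fc).ncard := by
              rw [Set.ncard_image_of_injOn (fun a _ b _ h => congrArg Prod.fst h)]
              exact (Set.ncard_coe_finset _).symm
          _ ≤ _ := Set.ncard_le_ncard himg (Set.toFinite _)
      have hfront : MPoint.vert u ∈ frontier X := by
        rw [frontier_eq_closure_inter_closure]
        refine ⟨subset_closure huX, ?_⟩
        obtain ⟨e, heFc⟩ := Finset.card_pos.mp hFcpos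
        have heF : e ∈ F := (Finset.mem_filter.mp heFc).1
        rcases (hFmem e).mp heF with ⟨hsrc, htlt⟩ | ⟨htgt, hslt⟩
        · obtain ⟨ε, hε, hfr⟩ := (hfree e heFc).1 hsrc
          have h0 : (0:ℝ) ∈ Set.Icc (0:ℝ) (G.len e) := ⟨le_refl _, le_of_lt (G.len_pos e)⟩
          have := mem_closure_right (S := Xᶜ) e 0 h0 ε hε (G.len_pos e)
            (fun s hs h1 h2 => hfr ⟨s, hs⟩ h2)
          rwa [phi_src e ⟨0, h0⟩ rfl, hsrc] at this
        · obtain ⟨ε, hε, hfr⟩ := (hfree e heFc).2 htgt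
          have h0 : G.len e ∈ Set.Icc (0:ℝ) (G.len e) := ⟨le_of_lt (G.len_pos e), le_refl _⟩
          have := mem_closure_left (S := Xᶜ) e (G.len e) h0 (G.len e - ε) (by linarith)
            (G.len_pos e) (fun s hs h1 h2 => hfr ⟨s, hs⟩ h1)
          rwa [phi_tgt e ⟨_, h0⟩ rfl, htgt] at this
      refine ⟨MPoint.vert u, hfront, ?_⟩
      have : (Fc.card : ℤ) ≤ (outdeg X (MPoint.vert u) : ℤ) := by exact_mod_cast hbound
      omega
    · -- some chipless earlier edge is not free : sup/inf of the trace is a good boundary point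
      push_neg at hfree
      obtain ⟨e, heFc, hnot⟩ := hfree
      have heF : e ∈ F := (Finset.mem_filter.mp heFc).1
      have hnochip : ¬ hasChip D e := (Finset.mem_filter.mp heFc).2
      have hDe : ∀ t, D (MPoint.inner e t) ≤ 0 := by
        intro t
        have h1 : ¬ (1 ≤ D (MPoint.inner e t)) := fun h => hnochip ⟨t, h⟩
        omega
      set T := trace X e with hT
      have hTcl : IsClosed T := isClosed_iff_traces.mp hXcl e
      have hTbddA : BddAbove T := ⟨G.len e, fun x hx => hx.1.2⟩
      have hTbddB : BddBelow T := ⟨0, fun x hx => hx.1.1⟩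
      rcases (hFmem e).mp heF with ⟨hsrc, htlt⟩ | ⟨htgt, hslt⟩
      · -- u is the source; X accumulates at the 0 end
        have htne : G.tgt e ≠ u := fun h => by rw [h] at htlt; omega
        have hNF : ∀ (ε : ℝ), 0 < ε →
            ∃ s : Set.Ioo (0:ℝ) (G.len e), (s:ℝ) < ε ∧ MPoint.inner e s ∈ X := by
          intro ε hε
          by_contra hc
          push_neg at hc
          exact htne (hnot (fun _ => ⟨ε, hε, hc⟩)).1
        obtain ⟨s0, hs0lt, hs0X⟩ := hNF (G.len e) (G.len_pos e)
        have hs0T : (s0 : ℝ) ∈ T := by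
          rw [hT, mem_trace_Ioo s0.2]
          rwa [Subtype.coe_eta]
        have hTne : T.Nonempty := ⟨_, hs0T⟩
        set b := sSup T with hb
        have hbT : b ∈ T := hTcl.csSup_mem hTne hTbddA
        have hbpos : 0 < b := lt_of_lt_of_le s0.2.1 (le_csSup hTbddA hs0T)
        have hblen : b < G.len e := by
          rcases lt_or_eq_of_le hbT.1.2 with h | h
          · exact h
          · exfalso
            have : MPoint.vert (G.tgt e) ∈ X := len_mem_trace.mp (h ▸ hbT)
            exact hnotX _ htlt this
        have hbIoo : b ∈ Set.Ioo (0:ℝ) (G.len e) := ⟨hbpos, hblen⟩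
        have hbX : MPoint.inner e ⟨b, hbIoo⟩ ∈ X := (mem_trace_Ioo hbIoo).mp hbT
        have habove : ∀ s (hs : s ∈ Set.Ioo (0:ℝ) (G.len e)), b < s →
            MPoint.inner e ⟨s, hs⟩ ∉ X := by
          intro s hs hbs hsX
          have : s ∈ T := (mem_trace_Ioo hs).mpr hsX
          have := le_csSup hTbddA this
          linarith
        obtain ⟨hf, ho⟩ := frontier_outdeg_right hbIoo hbX habove
        refine ⟨_, hf, ?_⟩
        have hD0 := hDe ⟨b, hbIoo⟩
        omega
      · -- u is the target; X accumulates at the len end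
        have hsne : G.src e ≠ u := fun h => by rw [h] at hslt; omega
        have hNF := (hnot (fun h => absurd h hsne)).2
        obtain ⟨s0, hs0lt, hs0X⟩ := hNF (G.len e) (G.len_pos e)
        have hs0T : (s0 : ℝ) ∈ T := by
          rw [hT, mem_trace_Ioo s0.2]
          rwa [Subtype.coe_eta]
        have hTne : T.Nonempty := ⟨_, hs0T⟩
        set a := sInf T with ha
        have haT : a ∈ T := hTcl.csInf_mem hTne hTbddB
        have halen : a < G.len e := lt_of_le_of_lt (csInf_le hTbddB hs0T) s0.2.2
        have hapos : 0 < a := by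
          rcases lt_or_eq_of_le haT.1.1 with h | h
          · exact h
          · exfalso
            have : MPoint.vert (G.src e) ∈ X := zero_mem_trace.mp (h ▸ haT)
            exact hnotX _ hslt this
        have haIoo : a ∈ Set.Ioo (0:ℝ) (G.len e) := ⟨hapos, halen⟩
        have haX : MPoint.inner e ⟨a, haIoo⟩ ∈ X := (mem_trace_Ioo haIoo).mp haT
        have hbelow : ∀ s (hs : s ∈ Set.Ioo (0:ℝ) (G.len e)), s < a →
            MPoint.inner e ⟨s, hs⟩ ∉ X := by
          intro s hs hsa hsX
          have : s ∈ T := (mem_trace_Ioo hs).mpr hsX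
          have := csInf_le hTbddB this
          linarith
        obtain ⟨hf, ho⟩ := frontier_outdeg_left haIoo haX hbelow
        refine ⟨_, hf, ?_⟩
        have hD0 := hDe ⟨a, haIoo⟩
        omega
  · -- X contains no vertex
    push_neg at hvert
    obtain ⟨p0, hp0⟩ := hXne
    obtain ⟨e, t0⟩ : ∃ (e : G.E) (t0 : Set.Ioo (0:ℝ) (G.len e)), MPoint.inner e t0 ∈ X := by
      cases p0 with
      | vert u => exact absurd hp0 (hvert u)
      | inner e t0 => exact ⟨e, t0, hp0⟩
    obtain ⟨t0, ht0⟩ := t0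
    set T := trace X e with hT
    have hTcl : IsClosed T := isClosed_iff_traces.mp hXcl e
    have hTbddA : BddAbove T := ⟨G.len e, fun x hx => hx.1.2⟩
    have hTbddB : BddBelow T := ⟨0, fun x hx => hx.1.1⟩
    have ht0T : (t0 : ℝ) ∈ T := by
      rw [hT, mem_trace_Ioo t0.2]
      rwa [Subtype.coe_eta]
    have hTne : T.Nonempty := ⟨_, ht0T⟩
    set a := sInf T with ha
    set b := sSup T with hb
    have haT : a ∈ T := hTcl.csInf_mem hTne hTbddB
    have hbT : b ∈ T := hTcl.csSup_mem hTne hTbddA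
    have hapos : 0 < a := by
      rcases lt_or_eq_of_le haT.1.1 with h | h
      · exact h
      · exact absurd (zero_mem_trace.mp (h ▸ haT)) (hvert _)
    have hblen : b < G.len e := by
      rcases lt_or_eq_of_le hbT.1.2 with h | h
      · exact h
      · exact absurd (len_mem_trace.mp (h ▸ hbT)) (hvert _)
    have hab : a ≤ b := csInf_le_csSup hTne hTbddB hTbddA
    have haIoo : a ∈ Set.Ioo (0:ℝ) (G.len e) := ⟨hapos, lt_of_le_of_lt hab hblen⟩
    have hbIoo : b ∈ Set.Ioo (0:ℝ) (G.len e) := ⟨lt_of_lt_of_le hapos hab, hblen⟩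
    have haX : MPoint.inner e ⟨a, haIoo⟩ ∈ X := (mem_trace_Ioo haIoo).mp haT
    have hbX : MPoint.inner e ⟨b, hbIoo⟩ ∈ X := (mem_trace_Ioo hbIoo).mp hbT
    have hbelow : ∀ s (hs : s ∈ Set.Ioo (0:ℝ) (G.len e)), s < a →
        MPoint.inner e ⟨s, hs⟩ ∉ X := by
      intro s hs hsa hsX
      have := csInf_le hTbddB ((mem_trace_Ioo hs).mpr hsX)
      linarith
    have habove : ∀ s (hs : s ∈ Set.Ioo (0:ℝ) (G.len e)), b < s →
        MPoint.inner e ⟨s, hs⟩ ∉ X := by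
      intro s hs hbs hsX
      have := le_csSup hTbddA ((mem_trace_Ioo hs).mpr hsX)
      linarith
    by_cases hDa : D (MPoint.inner e ⟨a, haIoo⟩) ≤ 0
    · obtain ⟨hf, ho⟩ := frontier_outdeg_left haIoo haX hbelow
      exact ⟨_, hf, by omega⟩
    · push_neg at hDa
      by_cases hab' : a = b
      · -- singleton trace : outdeg is 2, D at most 1
        obtain ⟨hf, _⟩ := frontier_outdeg_left haIoo haX hbelow
        refine ⟨_, hf, ?_⟩
        have hD1 : D (MPoint.inner e ⟨a, haIoo⟩) ≤ 1 :=
          le_trans (le_edgeSum hE e ⟨a, haIoo⟩) (hle e)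
        have h2 : 2 ≤ outdeg X (MPoint.inner e ⟨a, haIoo⟩) := by
          rw [outdeg_inner]
          have huniv : {d : Bool |
              if d then
                ∃ ε : ℝ, 0 < ε ∧ ∀ s : Set.Ioo (0 : ℝ) (G.len e),
                  a < (s : ℝ) → (s : ℝ) < a + ε → MPoint.inner e s ∉ X
              else
                ∃ ε : ℝ, 0 < ε ∧ ∀ s : Set.Ioo (0 : ℝ) (G.len e),
                  a - ε < (s : ℝ) → (s : ℝ) < a → MPoint.inner e s ∉ X} = Set.univ := by
            apply Set.eq_univ_of_forall
            intro d
            rw [Set.mem_setOf_eq]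
            cases d
            · rw [if_neg Bool.false_ne_true]
              refine ⟨1, one_pos, fun s _ h2 => ?_⟩
              have := hbelow (s:ℝ) s.2 h2
              rwa [Subtype.coe_eta] at this
            · rw [if_pos rfl]
              refine ⟨1, one_pos, fun s h1 _ => ?_⟩
              have := habove (s:ℝ) s.2 (hab' ▸ h1)
              rwa [Subtype.coe_eta] at this
          rw [huniv, Set.ncard_univ]
          simp [Nat.card_eq_fintype_card]
        omega
      · -- two ends : at most one can carry the chip
        have hab2 : a < b := lt_of_le_of_ne hab hab'
        have hDb : D (MPoint.inner e ⟨b, hbIoo⟩) ≤ 0 := by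
          by_contra hc
          push_neg at hc
          have := chips_subsingleton hE e (hle e) hDa hc
          simp only [] at this
          exact hab' this
        obtain ⟨hf, ho⟩ := frontier_outdeg_right hbIoo hbX habove
        exact ⟨_, hf, by omega⟩

lemma not_free_above {X : Set (MPoint G)} {e : G.E} {t : ℝ} (ht : t ∈ Set.Ioo (0:ℝ) (G.len e))
    {c : ℝ} (hc : t < c) (hcle : c ≤ G.len e)
    (hin : ∀ s (hs : s ∈ Set.Ioo (0:ℝ) (G.len e)), t < s → s ≤ c → MPoint.inner e ⟨s, hs⟩ ∈ X) :
    ¬ (∃ ε : ℝ, 0 < ε ∧ ∀ s : Set.Ioo (0:ℝ) (G.len e),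
        t < (s:ℝ) → (s:ℝ) < t + ε → MPoint.inner e s ∉ X) := by
  rintro ⟨ε, hε, hfree⟩
  set m := min (t + ε) c with hm
  have htm : t < m := lt_min (by linarith) hc
  set s' := (t + m) / 2 with hs'
  have h1 : t < s' := by simp only [hs']; linarith
  have h2 : s' < m := by simp only [hs']; linarith
  have hIoo : s' ∈ Set.Ioo (0:ℝ) (G.len e) :=
    ⟨lt_trans ht.1 h1, lt_of_lt_of_le (lt_of_lt_of_le h2 (min_le_right _ _)) hcle⟩
  exact hfree ⟨s', hIoo⟩ h1 (lt_of_lt_of_le h2 (min_le_left _ _))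
    (hin s' hIoo h1 (le_of_lt (lt_of_lt_of_le h2 (min_le_right _ _))))

lemma not_free_below {X : Set (MPoint G)} {e : G.E} {t : ℝ} (ht : t ∈ Set.Ioo (0:ℝ) (G.len e))
    {c : ℝ} (hc : c < t) (hcge : 0 ≤ c)
    (hin : ∀ s (hs : s ∈ Set.Ioo (0:ℝ) (G.len e)), c ≤ s → s < t → MPoint.inner e ⟨s, hs⟩ ∈ X) :
    ¬ (∃ ε : ℝ, 0 < ε ∧ ∀ s : Set.Ioo (0:ℝ) (G.len e),
        t - ε < (s:ℝ) → (s:ℝ) < t → MPoint.inner e s ∉ X) := by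
  rintro ⟨ε, hε, hfree⟩
  set m := max (t - ε) c with hm
  have htm : m < t := max_lt (by linarith) hc
  set s' := (t + m) / 2 with hs'
  have h1 : s' < t := by simp only [hs']; linarith
  have h2 : m < s' := by simp only [hs']; linarith
  have hIoo : s' ∈ Set.Ioo (0:ℝ) (G.len e) :=
    ⟨lt_of_le_of_lt (le_trans hcge (le_max_right _ _)) h2, lt_trans h1 ht.2⟩
  exact hfree ⟨s', hIoo⟩ (lt_of_le_of_lt (le_max_left _ _) h2) h1
    (hin s' hIoo (le_of_lt (lt_of_le_of_lt (le_max_right _ _) h2)) h1)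

lemma not_free_src {X : Set (MPoint G)} {e : G.E} {c : ℝ} (hc : 0 < c) (hcle : c ≤ G.len e)
    (hin : ∀ s (hs : s ∈ Set.Ioo (0:ℝ) (G.len e)), s ≤ c → MPoint.inner e ⟨s, hs⟩ ∈ X) :
    ¬ (∃ ε : ℝ, 0 < ε ∧ ∀ s : Set.Ioo (0:ℝ) (G.len e),
        (s:ℝ) < ε → MPoint.inner e s ∉ X) := by
  rintro ⟨ε, hε, hfree⟩
  set s' := min ε c / 2 with hs'
  have hm : 0 < min ε c := lt_min hε hc
  have h1 : 0 < s' := by simp only [hs']; linarith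
  have h2 : s' < min ε c := by simp only [hs']; linarith
  have hIoo : s' ∈ Set.Ioo (0:ℝ) (G.len e) :=
    ⟨h1, lt_of_lt_of_le (lt_of_lt_of_le h2 (min_le_right _ _)) hcle⟩
  exact hfree ⟨s', hIoo⟩ (lt_of_lt_of_le h2 (min_le_left _ _))
    (hin s' hIoo (le_of_lt (lt_of_lt_of_le h2 (min_le_right _ _))))

lemma not_free_tgt {X : Set (MPoint G)} {e : G.E} {c : ℝ} (hc : c < G.len e) (hcge : 0 ≤ c)
    (hin : ∀ s (hs : s ∈ Set.Ioo (0:ℝ) (G.len e)), c ≤ s → MPoint.inner e ⟨s, hs⟩ ∈ X) :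
    ¬ (∃ ε : ℝ, 0 < ε ∧ ∀ s : Set.Ioo (0:ℝ) (G.len e),
        G.len e - ε < (s:ℝ) → MPoint.inner e s ∉ X) := by
  rintro ⟨ε, hε, hfree⟩
  set m := max (G.len e - ε) c with hm
  have htm : m < G.len e := max_lt (by linarith) hc
  set s' := (G.len e + m) / 2 with hs'
  have h1 : s' < G.len e := by simp only [hs']; linarith
  have h2 : m < s' := by simp only [hs']; linarith
  have hIoo : s' ∈ Set.Ioo (0:ℝ) (G.len e) :=
    ⟨lt_of_le_of_lt (le_trans hcge (le_max_right _ _)) h2, h1⟩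
  exact hfree ⟨s', hIoo⟩ (lt_of_le_of_lt (le_max_left _ _) h2)
    (hin s' hIoo (le_of_lt (lt_of_le_of_lt (le_max_right _ _) h2)))

lemma count_chipless_le (hE : EffI D) (hle : ∀ e, edgeSum D e ≤ 1) {u : G.V} {F : Finset G.E}
    (h : (F.card : ℤ) ≤ D (MPoint.vert u) + ∑ e ∈ F, edgeSum D e) :
    ((F.filter (fun e => ¬ hasChip D e)).card : ℤ) ≤ D (MPoint.vert u) := by
  rw [sum_edgeSum hE hle] at h
  have hsplit := Finset.card_filter_add_card_filter_not
    (s := F) (p := fun e => hasChip D e)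
  have h1 : ((F.filter (fun e => hasChip D e)).card : ℤ)
      + ((F.filter (fun e => ¬ hasChip D e)).card : ℤ) = (F.card : ℤ) := by
    exact_mod_cast congrArg (Nat.cast : ℕ → ℤ) hsplit
  omega

/-- The edges joining `u` to the set `A`. -/
def edgesTo (A : Finset G.V) (u : G.V) : Finset G.E :=
  Finset.univ.filter fun e => (G.src e = u ∧ G.tgt e ∈ A) ∨ (G.tgt e = u ∧ G.src e ∈ A)

lemma key_step {v : G.V} {D : MDiv G} (hred : VReduced v D) (A : Finset G.V) (hvA : v ∈ A)
    (hAne : A ≠ Finset.univ) :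
    ∃ u, u ∉ A ∧
      D (MPoint.vert u) + ∑ e ∈ edgesTo A u, edgeSum D e < ((edgesTo A u).card : ℤ) := by
  by_contra hcon
  push_neg at hcon
  have hle := vreduced_edgeSum_le_one hred
  have hE : EffI D := effI_of v hred.1
  have hchip : ∀ u, u ∉ A →
      (((edgesTo A u).filter (fun e => ¬ hasChip D e)).card : ℤ) ≤ D (MPoint.vert u) :=
    fun u hu => count_chipless_le hE hle (hcon u hu)
  obtain ⟨u0, hu0⟩ : ∃ u, u ∉ A := by
    by_contra h; push_neg at h
    exact hAne (Finset.eq_univ_iff_forall.mpr h)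
  set Rel : G.V → G.V → Prop := fun a b => b ∉ A ∧
    ∃ e, (G.src e = a ∧ G.tgt e = b) ∨ (G.src e = b ∧ G.tgt e = a) with hRel
  set W : Set G.V := {x | Relation.ReflTransGen Rel u0 x} with hW
  have hu0W : u0 ∈ W := Relation.ReflTransGen.refl
  have hWnA : ∀ x, x ∈ W → x ∉ A := by
    intro x hx
    rcases Relation.ReflTransGen.cases_tail hx with h | ⟨c, _, hc⟩
    · exact h ▸ hu0
    · exact hc.1
  have hWadj : ∀ w, w ∈ W → ∀ x, x ∉ A →
      (∃ e, (G.src e = w ∧ G.tgt e = x) ∨ (G.src e = x ∧ G.tgt e = w)) → x ∈ W :=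
    fun w hw x hx he => Relation.ReflTransGen.tail hw ⟨hx, he⟩
  set inCond : (e : G.E) → Set.Ioo (0:ℝ) (G.len e) → Prop := fun e t =>
    (G.src e ∈ W ∧ G.tgt e ∈ W) ∨
    (G.src e ∈ W ∧ G.tgt e ∉ W ∧
      ∃ t' : Set.Ioo (0:ℝ) (G.len e), 1 ≤ D (MPoint.inner e t') ∧ (t:ℝ) ≤ (t':ℝ)) ∨
    (G.tgt e ∈ W ∧ G.src e ∉ W ∧
      ∃ t' : Set.Ioo (0:ℝ) (G.len e), 1 ≤ D (MPoint.inner e t') ∧ (t':ℝ) ≤ (t:ℝ)) with hinCond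
  set X : Set (MPoint G) := {p | (∃ w ∈ W, p = MPoint.vert w) ∨
      (∃ e t, p = MPoint.inner e t ∧ inCond e t)} with hX
  have hXvert : ∀ w, (MPoint.vert w ∈ X ↔ w ∈ W) := by
    intro w
    rw [hX, Set.mem_setOf_eq]
    constructor
    · rintro (⟨w', hw', heq⟩ | ⟨e, t, heq, _⟩)
      · cases heq; exact hw'
      · exact (inner_ne_vert e t w heq.symm).elim
    · intro hw; exact Or.inl ⟨w, hw, rfl⟩
  have hXinner : ∀ e t, (MPoint.inner e t ∈ X ↔ inCond e t) := by
    intro e t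
    rw [hX, Set.mem_setOf_eq]
    constructor
    · rintro (⟨w', _, heq⟩ | ⟨e', t', heq, hc⟩)
      · exact (inner_ne_vert e t w' heq).elim
      · obtain ⟨he, ht⟩ := inner_inj heq
        subst he
        obtain rfl : t = t' := Subtype.ext ht
        exact hc
    · intro h; exact Or.inr ⟨e, t, rfl, h⟩
  have hXclosed : IsClosed X := by
    rw [isClosed_iff_traces]
    intro e
    have hItri : ∀ s, s ∈ trace X e → s = 0 ∨ s = G.len e ∨
        ∃ hs : s ∈ Set.Ioo (0:ℝ) (G.len e), MPoint.inner e ⟨s, hs⟩ ∈ X := by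
      intro s hsT
      have hIcc := hsT.1
      rcases eq_or_lt_of_le hIcc.1 with h0 | h0
      · exact Or.inl h0.symm
      rcases eq_or_lt_of_le hIcc.2 with h1 | h1
      · exact Or.inr (Or.inl h1)
      · exact Or.inr (Or.inr ⟨⟨h0, h1⟩, (mem_trace_Ioo ⟨h0, h1⟩).mp hsT⟩)
    by_cases hsW : G.src e ∈ W <;> by_cases htW : G.tgt e ∈ W
    · have : trace X e = Set.Icc (0:ℝ) (G.len e) := by
        apply Set.eq_of_subset_of_subset (trace_subset_Icc X e)
        intro s hs
        rcases eq_or_lt_of_le hs.1 with h0 | h0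
        · exact h0 ▸ (zero_mem_trace.mpr ((hXvert _).mpr hsW))
        rcases eq_or_lt_of_le hs.2 with h1 | h1
        · exact h1 ▸ (len_mem_trace.mpr ((hXvert _).mpr htW))
        · exact (mem_trace_Ioo ⟨h0, h1⟩).mpr ((hXinner _ _).mpr (Or.inl ⟨hsW, htW⟩))
      rw [this]; exact isClosed_Icc
    · by_cases hch : hasChip D e
      · obtain ⟨c, hc⟩ := hch
        have : trace X e = Set.Icc (0:ℝ) (c:ℝ) := by
          ext s
          constructor
          · intro hsT
            rcases hItri s hsT with rfl | rfl | ⟨hs, hsX⟩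
            · exact ⟨le_refl _, le_of_lt c.2.1⟩
            · exact absurd ((hXvert _).mp (len_mem_trace.mp hsT)) htW
            · rcases (hXinner _ _).mp hsX with ⟨_, h⟩ | ⟨_, _, t', h1, hle'⟩ | ⟨_, h, _⟩
              · exact absurd h htW
              · have h2 := chips_subsingleton hE e (hle e) h1 hc
                have h3 : s ≤ (t' : ℝ) := hle'
                exact ⟨le_of_lt hs.1, by linarith⟩
              · exact absurd hsW h
          · intro hs
            rcases eq_or_lt_of_le hs.1 with h0 | h0
            · exact h0 ▸ (zero_mem_trace.mpr ((hXvert _).mpr hsW))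
            · have hsIoo : s ∈ Set.Ioo (0:ℝ) (G.len e) := ⟨h0, lt_of_le_of_lt hs.2 c.2.2⟩
              exact (mem_trace_Ioo hsIoo).mpr
                ((hXinner _ _).mpr (Or.inr (Or.inl ⟨hsW, htW, c, hc, hs.2⟩)))
        rw [this]; exact isClosed_Icc
      · have : trace X e = {0} := by
          ext s
          constructor
          · intro hsT
            rcases hItri s hsT with rfl | rfl | ⟨hs, hsX⟩
            · exact rfl
            · exact absurd ((hXvert _).mp (len_mem_trace.mp hsT)) htW
            · rcases (hXinner _ _).mp hsX with ⟨_, h⟩ | ⟨_, _, t', h1, _⟩ | ⟨_, h, _⟩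
              · exact absurd h htW
              · exact absurd ⟨t', h1⟩ hch
              · exact absurd hsW h
          · rintro rfl
            exact zero_mem_trace.mpr ((hXvert _).mpr hsW)
        rw [this]; exact isClosed_singleton
    · by_cases hch : hasChip D e
      · obtain ⟨c, hc⟩ := hch
        have : trace X e = Set.Icc (c:ℝ) (G.len e) := by
          ext s
          constructor
          · intro hsT
            rcases hItri s hsT with rfl | rfl | ⟨hs, hsX⟩
            · exact absurd ((hXvert _).mp (zero_mem_trace.mp hsT)) hsW
            · exact ⟨le_of_lt c.2.2, le_refl _⟩
            · rcases (hXinner _ _).mp hsX with ⟨h, _⟩ | ⟨h, _, _⟩ | ⟨_, _, t', h1, hle'⟩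
              · exact absurd h hsW
              · exact absurd h hsW
              · have h2 := chips_subsingleton hE e (hle e) h1 hc
                have h3 : (t' : ℝ) ≤ s := hle'
                exact ⟨by linarith, le_of_lt hs.2⟩
          · intro hs
            rcases eq_or_lt_of_le hs.2 with h1 | h1
            · exact h1 ▸ (len_mem_trace.mpr ((hXvert _).mpr htW))
            · have hsIoo : s ∈ Set.Ioo (0:ℝ) (G.len e) := ⟨lt_of_lt_of_le c.2.1 hs.1, h1⟩
              exact (mem_trace_Ioo hsIoo).mpr
                ((hXinner _ _).mpr (Or.inr (Or.inr ⟨htW, hsW, c, hc, hs.1⟩)))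
        rw [this]; exact isClosed_Icc
      · have : trace X e = {G.len e} := by
          ext s
          constructor
          · intro hsT
            rcases hItri s hsT with rfl | rfl | ⟨hs, hsX⟩
            · exact absurd ((hXvert _).mp (zero_mem_trace.mp hsT)) hsW
            · exact rfl
            · rcases (hXinner _ _).mp hsX with ⟨h, _⟩ | ⟨h, _, _⟩ | ⟨_, _, t', h1, _⟩
              · exact absurd h hsW
              · exact absurd h hsW
              · exact absurd ⟨t', h1⟩ hch
          · rintro rfl
            exact len_mem_trace.mpr ((hXvert _).mpr htW)
        rw [this]; exact isClosed_singleton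
    · have : trace X e = ∅ := by
        ext s
        simp only [Set.mem_empty_iff_false, iff_false]
        intro hsT
        rcases hItri s hsT with rfl | rfl | ⟨hs, hsX⟩
        · exact absurd ((hXvert _).mp (zero_mem_trace.mp hsT)) hsW
        · exact absurd ((hXvert _).mp (len_mem_trace.mp hsT)) htW
        · rcases (hXinner _ _).mp hsX with ⟨h, _⟩ | ⟨h, _, _⟩ | ⟨h, _, _⟩
          · exact absurd h hsW
          · exact absurd h hsW
          · exact absurd h htW
      rw [this]; exact isClosed_empty
  have hXne : X.Nonempty := ⟨MPoint.vert u0, (hXvert u0).mpr hu0W⟩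
  have hXavoid : X ⊆ {MPoint.vert v}ᶜ := by
    intro p hp
    simp only [Set.mem_compl_iff, Set.mem_singleton_iff]
    intro heq
    subst heq
    have := hWnA v ((hXvert v).mp hp)
    exact this hvA
  have hXconn : IsConnected X := by
    classical
    set psi : (e : G.E) → ℝ → MPoint G :=
      fun e => phi G e ∘ Set.projIcc 0 (G.len e) (le_of_lt (G.len_pos e)) with hpsi_def
    have hpsi : ∀ (e : G.E) (x : ℝ) (hx : x ∈ Set.Icc (0:ℝ) (G.len e)),
        psi e x = phi G e ⟨x, hx⟩ := by
      intro e x hx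
      simp only [hpsi_def, Function.comp_apply]
      rw [Set.projIcc_of_mem _ hx]
    have hpsi0 : ∀ e : G.E, psi e 0 = MPoint.vert (G.src e) := by
      intro e
      rw [hpsi e 0 ⟨le_refl _, le_of_lt (G.len_pos e)⟩, phi_src _ _ rfl]
    have hpsil : ∀ e : G.E, psi e (G.len e) = MPoint.vert (G.tgt e) := by
      intro e
      rw [hpsi e _ ⟨le_of_lt (G.len_pos e), le_refl _⟩, phi_tgt _ _ rfl]
    have hpsiI : ∀ (e : G.E) (x : ℝ) (hx : x ∈ Set.Ioo (0:ℝ) (G.len e)),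
        psi e x = MPoint.inner e ⟨x, hx⟩ := by
      intro e x hx
      rw [hpsi e x ⟨le_of_lt hx.1, le_of_lt hx.2⟩, phi_inner _ _ ⟨hx.1, hx.2⟩]
    set lo : G.E → ℝ := fun e => if G.src e ∈ W then 0 else
      (if h : hasChip D e then ((h.choose : Set.Ioo (0:ℝ) (G.len e)) : ℝ) else G.len e)
      with hlo_def
    set hi : G.E → ℝ := fun e => if G.tgt e ∈ W then G.len e else
      (if h : hasChip D e then ((h.choose : Set.Ioo (0:ℝ) (G.len e)) : ℝ) else 0)
      with hhi_def
    have hlo_mem : ∀ e, lo e ∈ Set.Icc (0:ℝ) (G.len e) := by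
      intro e
      simp only [hlo_def]
      split_ifs with h1 h2
      · exact ⟨le_refl _, le_of_lt (G.len_pos e)⟩
      · exact ⟨le_of_lt h2.choose.2.1, le_of_lt h2.choose.2.2⟩
      · exact ⟨le_of_lt (G.len_pos e), le_refl _⟩
    have hhi_mem : ∀ e, hi e ∈ Set.Icc (0:ℝ) (G.len e) := by
      intro e
      simp only [hhi_def]
      split_ifs with h1 h2
      · exact ⟨le_of_lt (G.len_pos e), le_refl _⟩
      · exact ⟨le_of_lt h2.choose.2.1, le_of_lt h2.choose.2.2⟩
      · exact ⟨le_refl _, le_of_lt (G.len_pos e)⟩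
    set sfun : G.E ⊕ G.V → Set (MPoint G) :=
      Sum.elim (fun e => psi e '' Set.Icc (lo e) (hi e)) (fun w => {MPoint.vert w}) with hsfun
    set tset : Set (G.E ⊕ G.V) :=
      {i | Sum.elim (fun e => G.src e ∈ W ∨ G.tgt e ∈ W) (fun w => w ∈ W) i} with htset
    have htset_inl : ∀ e : G.E, (Sum.inl e ∈ tset ↔ (G.src e ∈ W ∨ G.tgt e ∈ W)) :=
      fun e => Iff.rfl
    have htset_inr : ∀ w : G.V, (Sum.inr w ∈ tset ↔ w ∈ W) := fun w => Iff.rfl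
    have hsrc_mem : ∀ e : G.E, G.src e ∈ W → MPoint.vert (G.src e) ∈ sfun (Sum.inl e) := by
      intro e hsW
      have hlo0 : lo e = 0 := by simp only [hlo_def]; rw [if_pos hsW]
      refine ⟨0, ⟨le_of_eq hlo0, (hhi_mem e).1⟩, hpsi0 e⟩
    have htgt_mem : ∀ e : G.E, G.tgt e ∈ W → MPoint.vert (G.tgt e) ∈ sfun (Sum.inl e) := by
      intro e htW
      have hhil : hi e = G.len e := by simp only [hhi_def]; rw [if_pos htW]
      refine ⟨G.len e, ⟨(hlo_mem e).2, le_of_eq hhil.symm⟩, hpsil e⟩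
    -- X is the union of the pieces
    have hXeq : X = ⋃ i ∈ tset, sfun i := by
      apply Set.eq_of_subset_of_subset
      · intro p hp
        rw [hX, Set.mem_setOf_eq] at hp
        rcases hp with ⟨w, hw, rfl⟩ | ⟨e, t, rfl, hc⟩
        · exact Set.mem_biUnion ((htset_inr w).mpr hw) rfl
        · rcases hc with ⟨hsW, htW⟩ | ⟨hsW, htW, t', h1, hle'⟩ | ⟨htW, hsW, t', h1, hle'⟩
          · refine Set.mem_biUnion ((htset_inl e).mpr (Or.inl hsW)) ?_
            refine ⟨(t:ℝ), ?_, (hpsiI e t t.2).trans (by rw [Subtype.coe_eta])⟩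
            constructor
            · simp only [hlo_def]; rw [if_pos hsW]; exact le_of_lt t.2.1
            · simp only [hhi_def]; rw [if_pos htW]; exact le_of_lt t.2.2
          · refine Set.mem_biUnion ((htset_inl e).mpr (Or.inl hsW)) ?_
            refine ⟨(t:ℝ), ?_, (hpsiI e t t.2).trans (by rw [Subtype.coe_eta])⟩
            have hch : hasChip D e := ⟨t', h1⟩
            constructor
            · simp only [hlo_def]; rw [if_pos hsW]; exact le_of_lt t.2.1
            · simp only [hhi_def]
              rw [if_neg htW, dif_pos hch]
              have := chips_subsingleton hE e (hle e) h1 hch.choose_spec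
              have ht2 : (t:ℝ) ≤ (t':ℝ) := hle'
              linarith
          · refine Set.mem_biUnion ((htset_inl e).mpr (Or.inr htW)) ?_
            refine ⟨(t:ℝ), ?_, (hpsiI e t t.2).trans (by rw [Subtype.coe_eta])⟩
            have hch : hasChip D e := ⟨t', h1⟩
            constructor
            · simp only [hlo_def]
              rw [if_neg hsW, dif_pos hch]
              have := chips_subsingleton hE e (hle e) h1 hch.choose_spec
              have ht2 : (t':ℝ) ≤ (t:ℝ) := hle'
              linarith
            · simp only [hhi_def]; rw [if_pos htW]; exact le_of_lt t.2.2
      · intro p hp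
        rw [Set.mem_iUnion₂] at hp
        obtain ⟨i, hit, hpi⟩ := hp
        cases i with
        | inr w =>
          rw [Set.mem_singleton_iff.mp hpi]
          exact (hXvert w).mpr ((htset_inr w).mp hit)
        | inl e =>
          obtain ⟨x, hx, rfl⟩ := hpi
          have hx0 : (0:ℝ) ≤ x := le_trans (hlo_mem e).1 hx.1
          have hxl : x ≤ G.len e := le_trans hx.2 (hhi_mem e).2
          rcases eq_or_lt_of_le hx0 with h0 | h0
          · rw [← h0, hpsi0 e]
            refine (hXvert _).mpr ?_
            -- x = 0 means lo e ≤ 0 so lo e = 0, which forces src ∈ W (or chip/len positive)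
            by_contra hsW
            have : 0 < lo e := by
              simp only [hlo_def]
              rw [if_neg hsW]
              split_ifs with h2
              · exact h2.choose.2.1
              · exact G.len_pos e
            have := le_trans hx.1 (le_of_eq h0.symm)
            linarith [hx.1]
          rcases eq_or_lt_of_le hxl with h1 | h1
          · rw [h1, hpsil e]
            refine (hXvert _).mpr ?_
            by_contra htW
            have : hi e < G.len e := by
              simp only [hhi_def]
              rw [if_neg htW]
              split_ifs with h2
              · exact h2.choose.2.2
              · exact G.len_pos e
            linarith [hx.2, h1]
          · rw [hpsiI e x ⟨h0, h1⟩]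
            refine (hXinner _ _).mpr ?_
            by_cases hsW : G.src e ∈ W <;> by_cases htW : G.tgt e ∈ W
            · exact Or.inl ⟨hsW, htW⟩
            · refine Or.inr (Or.inl ⟨hsW, htW, ?_⟩)
              have hhi' := hx.2
              simp only [hhi_def] at hhi'
              rw [if_neg htW] at hhi'
              by_cases h2 : hasChip D e
              · rw [dif_pos h2] at hhi'
                exact ⟨h2.choose, h2.choose_spec, hhi'⟩
              · rw [dif_neg h2] at hhi'
                linarith
            · refine Or.inr (Or.inr ⟨htW, hsW, ?_⟩)
              have hlo' := hx.1
              simp only [hlo_def] at hlo'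
              rw [if_neg hsW] at hlo'
              by_cases h2 : hasChip D e
              · rw [dif_pos h2] at hlo'
                exact ⟨h2.choose, h2.choose_spec, hlo'⟩
              · rw [dif_neg h2] at hlo'
                linarith
            · exact absurd ((htset_inl e).mp hit) (by push_neg; exact ⟨hsW, htW⟩)
    -- the chain property
    set R : (G.E ⊕ G.V) → (G.E ⊕ G.V) → Prop :=
      fun i j => (sfun i ∩ sfun j).Nonempty ∧ i ∈ tset with hR
    have hclaim1 : ∀ w, w ∈ W → Relation.ReflTransGen R (Sum.inr u0) (Sum.inr w) ∧
        Relation.ReflTransGen R (Sum.inr w) (Sum.inr u0) := by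
      intro w hw
      induction hw with
      | refl => exact ⟨Relation.ReflTransGen.refl, Relation.ReflTransGen.refl⟩
      | tail hab hbc ih =>
        rename_i b c
        have hbW : b ∈ W := hab
        have hcW : c ∈ W := Relation.ReflTransGen.tail hab hbc
        obtain ⟨hcA, e, hor⟩ := hbc
        have hbe : MPoint.vert b ∈ sfun (Sum.inl e) := by
          rcases hor with ⟨h1, h2⟩ | ⟨h1, h2⟩
          · exact h1 ▸ hsrc_mem e (h1.symm ▸ hbW)
          · exact h2 ▸ htgt_mem e (h2.symm ▸ hbW)
        have hce : MPoint.vert c ∈ sfun (Sum.inl e) := by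
          rcases hor with ⟨h1, h2⟩ | ⟨h1, h2⟩
          · exact h2 ▸ htgt_mem e (h2.symm ▸ hcW)
          · exact h1 ▸ hsrc_mem e (h1.symm ▸ hcW)
        have hinlt : Sum.inl e ∈ tset := by
          rw [htset_inl]
          rcases hor with ⟨h1, _⟩ | ⟨_, h2⟩
          · exact Or.inl (h1.symm ▸ hbW)
          · exact Or.inr (h2.symm ▸ hbW)
        have hstep1 : R (Sum.inr b) (Sum.inl e) :=
          ⟨⟨MPoint.vert b, rfl, hbe⟩, (htset_inr b).mpr hbW⟩
        have hstep2 : R (Sum.inl e) (Sum.inr c) :=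
          ⟨⟨MPoint.vert c, hce, rfl⟩, hinlt⟩
        have hstep1' : R (Sum.inr c) (Sum.inl e) :=
          ⟨⟨MPoint.vert c, rfl, hce⟩, (htset_inr c).mpr hcW⟩
        have hstep2' : R (Sum.inl e) (Sum.inr b) :=
          ⟨⟨MPoint.vert b, hbe, rfl⟩, hinlt⟩
        exact ⟨(ih.1.tail hstep1).tail hstep2,
          Relation.ReflTransGen.head hstep1' (Relation.ReflTransGen.head hstep2' ih.2)⟩
    have hclaim2 : ∀ i, i ∈ tset → Relation.ReflTransGen R i (Sum.inr u0) ∧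
        Relation.ReflTransGen R (Sum.inr u0) i := by
      intro i hit
      cases i with
      | inr w => exact ⟨(hclaim1 w ((htset_inr w).mp hit)).2, (hclaim1 w ((htset_inr w).mp hit)).1⟩
      | inl e =>
        rcases (htset_inl e).mp hit with hsW | htW
        · have hv := hsrc_mem e hsW
          have hstep : R (Sum.inl e) (Sum.inr (G.src e)) :=
            ⟨⟨MPoint.vert (G.src e), hv, rfl⟩, hit⟩
          have hstep' : R (Sum.inr (G.src e)) (Sum.inl e) :=
            ⟨⟨MPoint.vert (G.src e), rfl, hv⟩, (htset_inr _).mpr hsW⟩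
          exact ⟨Relation.ReflTransGen.head hstep (hclaim1 _ hsW).2,
            (hclaim1 _ hsW).1.tail hstep'⟩
        · have hv := htgt_mem e htW
          have hstep : R (Sum.inl e) (Sum.inr (G.tgt e)) :=
            ⟨⟨MPoint.vert (G.tgt e), hv, rfl⟩, hit⟩
          have hstep' : R (Sum.inr (G.tgt e)) (Sum.inl e) :=
            ⟨⟨MPoint.vert (G.tgt e), rfl, hv⟩, (htset_inr _).mpr htW⟩
          exact ⟨Relation.ReflTransGen.head hstep (hclaim1 _ htW).2,
            (hclaim1 _ htW).1.tail hstep'⟩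
    have hpre : IsPreconnected (⋃ i ∈ tset, sfun i) := by
      apply IsPreconnected.biUnion_of_reflTransGen
      · intro i _
        cases i with
        | inl e =>
          apply IsPreconnected.image isPreconnected_Icc
          exact ((continuous_phi e).comp continuous_projIcc).continuousOn
        | inr w => exact isPreconnected_singleton
      · intro i hi' j hj'
        exact ((hclaim2 i hi').1).trans ((hclaim2 j hj').2)
    rw [hXeq] at hXne ⊢
    exact ⟨hXne, hpre⟩
  obtain ⟨p, hpf, hplt⟩ := hred.2 X hXne hXclosed hXconn hXavoid
  have hpX : p ∈ X := frontier_subset_self hXclosed hpf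
  cases p with
  | vert w =>
    have hwW : w ∈ W := (hXvert w).mp hpX
    have hwA : w ∉ A := hWnA w hwW
    have hchipw := hchip w hwA
    set Fcw := (edgesTo A w).filter (fun e => ¬ hasChip D e) with hFcw
    have hsub : {d : G.E × Bool |
        if d.2 = false then
          G.src d.1 = w ∧ ∃ ε : ℝ, 0 < ε ∧
            ∀ s : Set.Ioo (0 : ℝ) (G.len d.1), (s : ℝ) < ε → MPoint.inner d.1 s ∉ X
        else
          G.tgt d.1 = w ∧ ∃ ε : ℝ, 0 < ε ∧
            ∀ s : Set.Ioo (0 : ℝ) (G.len d.1), G.len d.1 - ε < (s : ℝ) →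
              MPoint.inner d.1 s ∉ X} ⊆
        (fun e => (e, if G.src e = w then false else true)) '' ↑Fcw := by
      intro d hd
      rw [Set.mem_setOf_eq] at hd
      by_cases hb : d.2 = false
      · rw [if_pos hb] at hd
        obtain ⟨hsrc, hfr⟩ := hd
        have hsW : G.src d.1 ∈ W := by rw [hsrc]; exact hwW
        have htW : G.tgt d.1 ∉ W := by
          intro htW
          refine not_free_src (G.len_pos d.1) (le_refl _) ?_ hfr
          intro s hs _
          exact (hXinner d.1 ⟨s, hs⟩).mpr (Or.inl ⟨hsW, htW⟩)
        have htA : G.tgt d.1 ∈ A := by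
          by_contra htA
          exact htW (hWadj w hwW (G.tgt d.1) htA ⟨d.1, Or.inl ⟨hsrc, rfl⟩⟩)
        have hnochip : ¬ hasChip D d.1 := by
          rintro ⟨c, hc⟩
          refine not_free_src c.2.1 (le_of_lt c.2.2) ?_ hfr
          intro s hs hsc
          exact (hXinner d.1 ⟨s, hs⟩).mpr (Or.inr (Or.inl ⟨hsW, htW, c, hc, hsc⟩))
        have heFc : d.1 ∈ Fcw := Finset.mem_filter.mpr
          ⟨Finset.mem_filter.mpr ⟨Finset.mem_univ _, Or.inl ⟨hsrc, htA⟩⟩, hnochip⟩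
        refine ⟨d.1, heFc, ?_⟩
        have h2 : (if G.src d.1 = w then false else true) = d.2 := by rw [if_pos hsrc, hb]
        exact Prod.ext rfl h2
      · rw [if_neg hb] at hd
        obtain ⟨htgt, hfr⟩ := hd
        have htWW : G.tgt d.1 ∈ W := by rw [htgt]; exact hwW
        have hsWn : G.src d.1 ∉ W := by
          intro hsW
          refine not_free_tgt (G.len_pos d.1) (le_refl (0:ℝ)) ?_ hfr
          intro s hs _
          exact (hXinner d.1 ⟨s, hs⟩).mpr (Or.inl ⟨hsW, htWW⟩)
        have hsA : G.src d.1 ∈ A := by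
          by_contra hsA
          exact hsWn (hWadj w hwW (G.src d.1) hsA ⟨d.1, Or.inr ⟨rfl, htgt⟩⟩)
        have hnochip : ¬ hasChip D d.1 := by
          rintro ⟨c, hc⟩
          refine not_free_tgt c.2.2 (le_of_lt c.2.1) ?_ hfr
          intro s hs hsc
          exact (hXinner d.1 ⟨s, hs⟩).mpr (Or.inr (Or.inr ⟨htWW, hsWn, c, hc, hsc⟩))
        have heFc : d.1 ∈ Fcw := Finset.mem_filter.mpr
          ⟨Finset.mem_filter.mpr ⟨Finset.mem_univ _, Or.inr ⟨htgt, hsA⟩⟩, hnochip⟩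
        refine ⟨d.1, heFc, ?_⟩
        have hsne : G.src d.1 ≠ w := fun h => hsWn (by rw [h]; exact hwW)
        have h2 : (if G.src d.1 = w then false else true) = d.2 := by
          rw [if_neg hsne]
          cases hq : d.2
          · exact absurd hq hb
          · rfl
        exact Prod.ext rfl h2
    have hod : outdeg X (MPoint.vert w) ≤ Fcw.card := by
      rw [outdeg_vert]
      refine le_trans (Set.ncard_le_ncard hsub (Set.toFinite _)) (le_of_eq ?_)
      rw [Set.ncard_image_of_injOn (fun a _ b _ h => congrArg Prod.fst h),
        Set.ncard_coe_finset]
    have hodz : (outdeg X (MPoint.vert w) : ℤ) ≤ (Fcw.card : ℤ) := by exact_mod_cast hod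
    omega
  | inner e t =>
    have htc : inCond e t := (hXinner e t).mp hpX
    have hblockB : (∀ s (hs : s ∈ Set.Ioo (0:ℝ) (G.len e)), s < (t:ℝ) →
        MPoint.inner e ⟨s, hs⟩ ∈ X) →
        ¬ (∃ ε : ℝ, 0 < ε ∧ ∀ s : Set.Ioo (0:ℝ) (G.len e),
          (t:ℝ) - ε < (s:ℝ) → (s:ℝ) < (t:ℝ) → MPoint.inner e s ∉ X) := by
      intro hin
      exact not_free_below t.2 t.2.1 (le_refl (0:ℝ)) (fun s hs _ h2 => hin s hs h2)
    rw [outdeg_inner] at hplt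
    rcases htc with ⟨hsW, htW⟩ | ⟨hsW, htW, t', h1, hle'⟩ | ⟨htW, hsW, t', h1, hle'⟩
    · -- whole edge in X : outdeg 0
      have hsub : {d : Bool |
          if d then
            ∃ ε : ℝ, 0 < ε ∧ ∀ s : Set.Ioo (0 : ℝ) (G.len e),
              (t : ℝ) < (s : ℝ) → (s : ℝ) < (t : ℝ) + ε → MPoint.inner e s ∉ X
          else
            ∃ ε : ℝ, 0 < ε ∧ ∀ s : Set.Ioo (0 : ℝ) (G.len e),
              (t : ℝ) - ε < (s : ℝ) → (s : ℝ) < (t : ℝ) → MPoint.inner e s ∉ X} ⊆ ∅ := by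
        intro d hd
        rw [Set.mem_setOf_eq] at hd
        by_cases hb : d = true
        · rw [if_pos hb] at hd
          refine not_free_above t.2 t.2.2 (le_refl _) ?_ hd
          intro s hs _ _
          exact (hXinner e ⟨s, hs⟩).mpr (Or.inl ⟨hsW, htW⟩)
        · rw [if_neg hb] at hd
          refine hblockB ?_ hd
          intro s hs _
          exact (hXinner e ⟨s, hs⟩).mpr (Or.inl ⟨hsW, htW⟩)
      have h0 := le_trans (Set.ncard_le_ncard hsub Set.finite_empty) (le_of_eq (Set.ncard_empty _))
      have hD0 := hE e t
      omega
    · -- src side segment, chip at t' with t ≤ t'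
      rcases eq_or_lt_of_le (hle' : (t:ℝ) ≤ (t':ℝ)) with heq | hlt
      · -- t is the chip point : D ≥ 1, outdeg ≤ 1
        obtain rfl : t = t' := Subtype.ext heq
        have hsub : {d : Bool |
            if d then
              ∃ ε : ℝ, 0 < ε ∧ ∀ s : Set.Ioo (0 : ℝ) (G.len e),
                (t : ℝ) < (s : ℝ) → (s : ℝ) < (t : ℝ) + ε → MPoint.inner e s ∉ X
            else
              ∃ ε : ℝ, 0 < ε ∧ ∀ s : Set.Ioo (0 : ℝ) (G.len e),
                (t : ℝ) - ε < (s : ℝ) → (s : ℝ) < (t : ℝ) → MPoint.inner e s ∉ X} ⊆ {true} := by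
          intro d hd
          rw [Set.mem_setOf_eq] at hd
          by_cases hb : d = true
          · exact hb
          · rw [if_neg hb] at hd
            refine (hblockB ?_ hd).elim
            intro s hs hst
            exact (hXinner e ⟨s, hs⟩).mpr (Or.inr (Or.inl ⟨hsW, htW, t, h1, le_of_lt hst⟩))
        have h0 := le_trans (Set.ncard_le_ncard hsub (Set.finite_singleton _))
          (le_of_eq (Set.ncard_singleton _))
        omega
      · -- t strictly below the chip : outdeg 0
        have hsub : {d : Bool |
            if d then
              ∃ ε : ℝ, 0 < ε ∧ ∀ s : Set.Ioo (0 : ℝ) (G.len e),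
                (t : ℝ) < (s : ℝ) → (s : ℝ) < (t : ℝ) + ε → MPoint.inner e s ∉ X
            else
              ∃ ε : ℝ, 0 < ε ∧ ∀ s : Set.Ioo (0 : ℝ) (G.len e),
                (t : ℝ) - ε < (s : ℝ) → (s : ℝ) < (t : ℝ) → MPoint.inner e s ∉ X} ⊆ ∅ := by
          intro d hd
          rw [Set.mem_setOf_eq] at hd
          by_cases hb : d = true
          · rw [if_pos hb] at hd
            refine not_free_above t.2 hlt (le_of_lt t'.2.2) ?_ hd
            intro s hs _ hsc
            exact (hXinner e ⟨s, hs⟩).mpr (Or.inr (Or.inl ⟨hsW, htW, t', h1, hsc⟩))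
          · rw [if_neg hb] at hd
            refine hblockB ?_ hd
            intro s hs hst
            exact (hXinner e ⟨s, hs⟩).mpr
              (Or.inr (Or.inl ⟨hsW, htW, t', h1, le_of_lt (lt_of_lt_of_le hst hle')⟩))
        have h0 := le_trans (Set.ncard_le_ncard hsub Set.finite_empty)
          (le_of_eq (Set.ncard_empty _))
        have hD0 := hE e t
        omega
    · -- tgt side segment, chip at t' with t' ≤ t
      rcases eq_or_lt_of_le (hle' : (t':ℝ) ≤ (t:ℝ)) with heq | hlt
      · obtain rfl : t = t' := Subtype.ext heq.symm
        have hsub : {d : Bool |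
            if d then
              ∃ ε : ℝ, 0 < ε ∧ ∀ s : Set.Ioo (0 : ℝ) (G.len e),
                (t : ℝ) < (s : ℝ) → (s : ℝ) < (t : ℝ) + ε → MPoint.inner e s ∉ X
            else
              ∃ ε : ℝ, 0 < ε ∧ ∀ s : Set.Ioo (0 : ℝ) (G.len e),
                (t : ℝ) - ε < (s : ℝ) → (s : ℝ) < (t : ℝ) → MPoint.inner e s ∉ X} ⊆ {false} := by
          intro d hd
          rw [Set.mem_setOf_eq] at hd
          by_cases hb : d = true
          · rw [if_pos hb] at hd
            refine absurd ?_ (not_not.mpr hd)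
            refine not_free_above t.2 t.2.2 (le_refl _) ?_
            intro s hs hst _
            exact (hXinner e ⟨s, hs⟩).mpr (Or.inr (Or.inr ⟨htW, hsW, t, h1, le_of_lt hst⟩))
          · simp only [Bool.not_eq_true] at hb
            exact hb
        have h0 := le_trans (Set.ncard_le_ncard hsub (Set.finite_singleton _))
          (le_of_eq (Set.ncard_singleton _))
        omega
      · have hsub : {d : Bool |
            if d then
              ∃ ε : ℝ, 0 < ε ∧ ∀ s : Set.Ioo (0 : ℝ) (G.len e),
                (t : ℝ) < (s : ℝ) → (s : ℝ) < (t : ℝ) + ε → MPoint.inner e s ∉ X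
            else
              ∃ ε : ℝ, 0 < ε ∧ ∀ s : Set.Ioo (0 : ℝ) (G.len e),
                (t : ℝ) - ε < (s : ℝ) → (s : ℝ) < (t : ℝ) → MPoint.inner e s ∉ X} ⊆ ∅ := by
          intro d hd
          rw [Set.mem_setOf_eq] at hd
          by_cases hb : d = true
          · rw [if_pos hb] at hd
            refine not_free_above t.2 t.2.2 (le_refl _) ?_ hd
            intro s hs hst _
            exact (hXinner e ⟨s, hs⟩).mpr
              (Or.inr (Or.inr ⟨htW, hsW, t', h1, le_trans hle' (le_of_lt hst)⟩))
          · rw [if_neg hb] at hd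
            refine not_free_below t.2 hlt (le_of_lt t'.2.1) ?_ hd
            intro s hs hsc _
            exact (hXinner e ⟨s, hs⟩).mpr (Or.inr (Or.inr ⟨htW, hsW, t', h1, hsc⟩))
        have h0 := le_trans (Set.ncard_le_ncard hsub Set.finite_empty)
          (le_of_eq (Set.ncard_empty _))
        have hD0 := hE e t
        omega


/-- A partial order-list certifying the reducedness inequalities. -/
def goodList (v : G.V) (D : MDiv G) (l : List G.V) : Prop :=
  l.Nodup ∧ l.head? = some v ∧
  ∀ (k : ℕ) (hk : k < l.length), 0 < k →
    D (MPoint.vert (l[k]'hk)) + ∑ e ∈ edgesTo (l.take k).toFinset (l[k]'hk), edgeSum D e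
      < ((edgesTo (l.take k).toFinset (l[k]'hk)).card : ℤ)

lemma extend_list {v : G.V} {D : MDiv G} (hred : VReduced v D) :
    ∀ (n : ℕ) (l : List G.V), goodList v D l → l.toFinset.card + n = Fintype.card G.V →
    ∃ l' : List G.V, goodList v D l' ∧ ∀ u, u ∈ l' := by
  intro n
  induction n with
  | zero =>
    intro l hg hcard
    refine ⟨l, hg, ?_⟩
    have huniv : l.toFinset = Finset.univ :=
      Finset.eq_univ_of_card _ (by rw [← Finset.card_univ] at hcard ⊢; omega)
    intro u
    rw [← List.mem_toFinset, huniv]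
    exact Finset.mem_univ u
  | succ n ih =>
    intro l hg hcard
    have hvl : v ∈ l := by
      have h := hg.2.1
      cases l with
      | nil => simp at h
      | cons a tl =>
        simp only [List.head?] at h
        rw [Option.some_inj] at h
        exact h ▸ List.mem_cons_self
    have hvA : v ∈ l.toFinset := List.mem_toFinset.mpr hvl
    have hAne : l.toFinset ≠ Finset.univ := by
      intro h
      rw [h, Finset.card_univ] at hcard
      omega
    obtain ⟨u, huA, hgood⟩ := key_step hred l.toFinset hvA hAne
    have hul : u ∉ l := fun h => huA (List.mem_toFinset.mpr h)
    refine ih (l ++ [u]) ⟨?_, ?_, ?_⟩ ?_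
    · rw [List.nodup_append]
      exact ⟨hg.1, List.nodup_singleton u, fun a ha b hb hab => by
        rw [List.mem_singleton] at hb
        subst hb; subst hab; exact hul ha⟩
    · rw [List.head?_append, hg.2.1]
      rfl
    · intro k hk hk0
      by_cases hkl : k < l.length
      · have hget : (l ++ [u])[k]'hk = l[k]'hkl := List.getElem_append_left hkl
        have htake : (l ++ [u]).take k = l.take k := by
          rw [List.take_append, Nat.sub_eq_zero_of_le (le_of_lt hkl)]
          simp
        rw [hget, htake]
        exact hg.2.2 k hkl hk0
      · have hkeq : k = l.length := by
          have := hk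
          simp only [List.length_append, List.length_singleton] at this
          omega
        subst hkeq
        have hget : (l ++ [u])[l.length]'hk = u := by
          rw [List.getElem_append_right (le_refl _)]
          simp
        have htake : (l ++ [u]).take l.length = l := List.take_left
        rw [hget, htake]
        exact hgood
    · have htf : (l ++ [u]).toFinset = l.toFinset ∪ {u} := by
        simp [List.toFinset_append]
      rw [htf, Finset.card_union_of_disjoint (Finset.disjoint_singleton_right.mpr huA),
        Finset.card_singleton]
      omega

end MetricGraphAux

/-- Characterization of `v`-reduced divisors on a metric graph: `D` is `v`-reduced iff it is
nonnegative away from `v`, each open edge carries total coefficient at most `1`, and there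
is a total order on the vertices with minimum `v` such that `D̃(u) < d̃(u)` for every
vertex `u ≠ v`. -/
theorem vReduced_iff (G : MGraph) [Nonempty G.V]
    (hconn : ∀ v w : G.V, Relation.ReflTransGen
      (fun x y => ∃ e : G.E, (G.src e = x ∧ G.tgt e = y) ∨ (G.src e = y ∧ G.tgt e = x)) v w)
    (v : G.V) (D : MDiv G) :
    VReduced v D ↔
      ((∀ p, p ≠ MPoint.vert v → 0 ≤ D p) ∧
       (∀ e : G.E, edgeSum D e ≤ 1) ∧
       (∃ ord : G.V → ℕ, Function.Injective ord ∧ (∀ u, ord v ≤ ord u) ∧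
         ∀ u, u ≠ v → Dtilde D ord u < dtilde (G := G) ord u)) := by
  constructor
  · intro hred
    refine ⟨hred.1, fun e => MetricGraphAux.vreduced_edgeSum_le_one hred e, ?_⟩
    have hstart : MetricGraphAux.goodList v D [v] := by
      refine ⟨List.nodup_singleton v, rfl, ?_⟩
      intro k hk hk0
      simp only [List.length_singleton] at hk
      omega
    have hcard1 : ([v] : List G.V).toFinset.card = 1 := by simp
    have hcpos : 1 ≤ Fintype.card G.V := Fintype.card_pos
    obtain ⟨l, hgl, hall⟩ := MetricGraphAux.extend_list hred (Fintype.card G.V - 1) [v] hstart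
      (by rw [hcard1]; omega)
    obtain ⟨tl, rfl⟩ : ∃ tl, l = v :: tl := by
      cases l with
      | nil => exact absurd hgl.2.1 (by simp)
      | cons a tl =>
        have h := hgl.2.1
        simp only [List.head?] at h
        rw [Option.some_inj] at h
        exact ⟨tl, by rw [h]⟩
    set L : List G.V := v :: tl with hL
    set ord : G.V → ℕ := fun u => L.idxOf u with hord
    have hinj : Function.Injective ord :=
      fun a b h => (List.idxOf_inj (hall a)).mp h
    have hordv : ord v = 0 := List.idxOf_cons_self
    refine ⟨ord, hinj, fun u => by rw [hordv]; exact Nat.zero_le _, ?_⟩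
    intro u hu
    have hklen : L.idxOf u < L.length := List.idxOf_lt_length_iff.mpr (hall u)
    have hgetu : L[L.idxOf u]'hklen = u := List.getElem_idxOf hklen
    have hk0 : 0 < L.idxOf u := by
      rcases Nat.eq_zero_or_pos (L.idxOf u) with h0 | h
      · exfalso
        apply hu
        rw [← hgetu]
        rw [hL] at h0
        simp only [hL]
        simp only [h0, List.getElem_cons_zero]
      · exact h
    have hiff : ∀ x, (ord x < ord u ↔ x ∈ (L.take (L.idxOf u)).toFinset) := by
      intro x
      rw [List.mem_toFinset]
      constructor
      · intro hlt
        by_contra hxt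
        have hsplit := List.take_append_drop (L.idxOf u) L
        have hidx : L.idxOf x =
            (L.take (L.idxOf u)).length + (L.drop (L.idxOf u)).idxOf x := by
          conv_lhs => rw [← hsplit]
          exact List.idxOf_append_of_notMem hxt
        have hlen : (L.take (L.idxOf u)).length = L.idxOf u := by
          rw [List.length_take]
          omega
        have h4 : ord x = L.idxOf x := rfl
        have h5 : ord u = L.idxOf u := rfl
        omega
      · intro hxt
        have hsplit := List.take_append_drop (L.idxOf u) L
        have hidx : L.idxOf x = (L.take (L.idxOf u)).idxOf x := by
          conv_lhs => rw [← hsplit]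
          exact List.idxOf_append_of_mem hxt
        have hlt : (L.take (L.idxOf u)).idxOf x < (L.take (L.idxOf u)).length :=
          List.idxOf_lt_length_iff.mpr hxt
        have hlen : (L.take (L.idxOf u)).length = L.idxOf u := by
          rw [List.length_take]
          omega
        have h4 : ord x = L.idxOf x := rfl
        have h5 : ord u = L.idxOf u := rfl
        omega
    have hEE : earlierEdges ord u = MetricGraphAux.edgesTo (L.take (L.idxOf u)).toFinset u := by
      unfold earlierEdges MetricGraphAux.edgesTo
      apply Finset.filter_congr
      intro e _
      rw [hiff (G.tgt e), hiff (G.src e)]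
    have hDt := hgl.2.2 (L.idxOf u) hklen hk0
    rw [hgetu] at hDt
    unfold Dtilde dtilde
    rw [hEE]
    exact hDt
  · rintro ⟨h1, h2, ord, hinj, hmin, h3⟩
    exact MetricGraphAux.backward_dir h1 h2 ord h3
end

section
/- Let m,n ≥ 2, and consider the metric graph K_{m,n} with unit edge lengths, vertices v₁,…,v_m,w₁,…,w_n. Let D be a v_m-reduced divisor on K_{m,n} equipped with an order v_m ≺ v₁ ≺ … ≺ v_{m-1}, v_m ≺ w₁ ≺ … ≺ w_n as in the reducedness characterization, where D̃(u) denotes D(u) plus the interior edge contributions from edges to earlier vertices, and d̃(u) denotes the number of edges to earlier vertices. Then for each i ∈ {1,…,n}: D̃(wᵢ) + 1 - #{j ∈ {1,…,m-1} : D̃(vⱼ) ≤ i - 2} ≤ 1. -/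
attribute [local instance] Classical.propDecidable

/- In `K_{m,n}` the edges from a vertex to earlier vertices go to earlier vertices of the
other side, so reducedness gives `D̃(wᵢ) < #{v ≺ wᵢ}` and `D̃(vⱼ) < #{w ≺ vⱼ}`. A vertex
`vⱼ ≠ v_m` with `vⱼ ≺ wᵢ` can only be preceded by `w₁, …, w_{i-1}`, hence `D̃(vⱼ) ≤ i - 2`.
So every `v ≺ wᵢ` other than `v_m` is counted in `#{j : D̃(vⱼ) ≤ i - 2}`, which is therefore
at least `#{v ≺ wᵢ} - 1 ≥ D̃(wᵢ)`. -/

open Finset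

namespace Kgraph

variable {m n : ℕ} (ord : Fin m ⊕ Fin n → ℕ)

theorem mem_earlierEdges_inl (v : Fin m) (e : (Kgraph m n).E) :
    e ∈ earlierEdges ord (Sum.inl v) ↔ e.1 = v ∧ ord (Sum.inr e.2) < ord (Sum.inl v) := by
  simp only [earlierEdges, mem_filter, mem_univ, true_and]
  simp [Kgraph]

theorem mem_earlierEdges_inr (w : Fin n) (e : (Kgraph m n).E) :
    e ∈ earlierEdges ord (Sum.inr w) ↔ e.2 = w ∧ ord (Sum.inl e.1) < ord (Sum.inr w) := by
  simp only [earlierEdges, mem_filter, mem_univ, true_and]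
  simp [Kgraph]

theorem dtilde_inl (v : Fin m) :
    dtilde (G := Kgraph m n) ord (Sum.inl v) =
      #(filter (fun w => ord (Sum.inr w) < ord (Sum.inl v)) univ) := by
  unfold dtilde
  refine congrArg Nat.cast (card_nbij' Prod.snd (Prod.mk v) ?_ ?_ ?_ fun _ _ => rfl)
  · intro e he
    simpa using ((mem_earlierEdges_inl ord v e).1 he).2
  · intro w hw
    exact (mem_earlierEdges_inl ord v (v, w)).2 ⟨rfl, by simpa using hw⟩
  · intro e he
    exact Prod.ext ((mem_earlierEdges_inl ord v e).1 he).1.symm rfl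

theorem dtilde_inr (w : Fin n) :
    dtilde (G := Kgraph m n) ord (Sum.inr w) =
      #(filter (fun v => ord (Sum.inl v) < ord (Sum.inr w)) univ) := by
  unfold dtilde
  refine congrArg Nat.cast (card_nbij' Prod.fst (·, w) ?_ ?_ ?_ fun _ _ => rfl)
  · intro e he
    simpa using ((mem_earlierEdges_inr ord w e).1 he).2
  · intro v hv
    exact (mem_earlierEdges_inr ord w (v, w)).2 ⟨rfl, by simpa using hv⟩
  · intro e he
    exact Prod.ext rfl ((mem_earlierEdges_inr ord w e).1 he).1.symm

end Kgraph

theorem Fin.card_filter_lt_le_of_strictMono {n : ℕ} {f : Fin n → ℕ} (hf : StrictMono f)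
    {c : ℕ} {i : Fin n} (hc : c < f i) : #(filter (fun k => f k < c) univ) ≤ i :=
  calc #(filter (fun k => f k < c) univ)
      ≤ #(Iio i) := card_le_card fun _ hk =>
        mem_Iio.mpr (hf.lt_iff_lt.mp ((mem_filter.mp hk).2.trans hc))
    _ = i := Fin.card_Iio i

theorem Kgraph.Dtilde_inl_le_of_lt_inr {m n : ℕ} {D : MDiv (Kgraph m n)}
    {ord : Fin m ⊕ Fin n → ℕ} (hordw : StrictMono fun k : Fin n => ord (Sum.inr k))
    {v : Fin m} (hv : Dtilde D ord (Sum.inl v) < dtilde (G := Kgraph m n) ord (Sum.inl v))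
    {w : Fin n} (hvw : ord (Sum.inl v) < ord (Sum.inr w)) :
    Dtilde D ord (Sum.inl v) ≤ (w : ℤ) - 1 := by
  have hcard := Fin.card_filter_lt_le_of_strictMono hordw hvw
  rw [dtilde_inl] at hv
  omega

theorem r_vector_le_one_general (m n : ℕ)
    (D : MDiv (Kgraph m n)) (ord : Fin m ⊕ Fin n → ℕ)
    (vm : Fin m) (hvm : (vm : ℕ) = m - 1)
    (hfirst : ∀ u : Fin m ⊕ Fin n, u ≠ Sum.inl vm → ord (Sum.inl vm) < ord u)
    (hordw : ∀ i j : Fin n, (i : ℕ) < (j : ℕ) → ord (Sum.inr i) < ord (Sum.inr j))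
    (hred : ∀ u : Fin m ⊕ Fin n, u ≠ Sum.inl vm →
      Dtilde D ord u < dtilde (G := Kgraph m n) ord u) :
    ∀ i : Fin n,
      Dtilde D ord (Sum.inr i) + 1 -
        ((Finset.univ.filter fun j : Fin m =>
          (j : ℕ) < m - 1 ∧ Dtilde D ord (Sum.inl j) ≤ (i : ℤ) - 1).card : ℤ) ≤ 1 := by
  intro i
  set S := filter (fun v => ord (Sum.inl v) < ord (Sum.inr i)) univ
  set T := filter (fun j : Fin m => (j : ℕ) < m - 1 ∧ Dtilde D ord (Sum.inl j) ≤ (i : ℤ) - 1) univ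
  have hw : Dtilde D ord (Sum.inr i) < #S := by
    simpa [Kgraph.dtilde_inr] using hred (Sum.inr i) Sum.inr_ne_inl
  have hvm_mem : vm ∈ S := by simpa [S] using hfirst (Sum.inr i) Sum.inr_ne_inl
  have hST : S.erase vm ⊆ T := by
    intro j hj
    obtain ⟨hj_ne, hj_lt⟩ : j ≠ vm ∧ ord (Sum.inl j) < ord (Sum.inr i) := by simpa [S] using hj
    have hj_val : (j : ℕ) ≠ m - 1 := fun h => hj_ne (Fin.ext (h.trans hvm.symm))
    simp only [T, mem_filter, mem_univ, true_and]
    exact ⟨by omega, Kgraph.Dtilde_inl_le_of_lt_inr (fun a b h => hordw a b h)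
      (hred (Sum.inl j) (by simpa using hj_ne)) hj_lt⟩
  have hcard : #S ≤ #T + 1 := by
    have := card_le_card hST
    rw [card_erase_of_mem hvm_mem] at this
    omega
  omega

/-- For a `v_m`-reduced divisor on the unit-length `K_{m,n}`, with an order
`v_m ≺ v₁ ≺ … ≺ v_{m-1}`, `v_m ≺ w₁ ≺ … ≺ w_n` as in the characterization of reduced
divisors (here `v_m = Sum.inl ⟨m-1⟩`, `v_j = Sum.inl ⟨j-1⟩`, `w_i = Sum.inr ⟨i-1⟩`),
one has `D̃(wᵢ) + 1 - #{j : D̃(vⱼ) ≤ i-2} ≤ 1` for each `i`. -/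
theorem r_vector_le_one (m n : ℕ) (hm : 2 ≤ m) (hn : 2 ≤ n)
    (D : MDiv (Kgraph m n)) (ord : Fin m ⊕ Fin n → ℕ)
    (vm : Fin m) (hvm : (vm : ℕ) = m - 1)
    (hinj : Function.Injective ord)
    (hfirst : ∀ u : Fin m ⊕ Fin n, u ≠ Sum.inl vm → ord (Sum.inl vm) < ord u)
    (hordv : ∀ i j : Fin m, (i : ℕ) < (j : ℕ) → (j : ℕ) < m - 1 →
      ord (Sum.inl i) < ord (Sum.inl j))
    (hordw : ∀ i j : Fin n, (i : ℕ) < (j : ℕ) → ord (Sum.inr i) < ord (Sum.inr j))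
    (heff : ∀ p : MPoint (Kgraph m n), p ≠ MPoint.vert (Sum.inl vm) → 0 ≤ D p)
    (hedge : ∀ e : (Kgraph m n).E, edgeSum D e ≤ 1)
    (hred : ∀ u : Fin m ⊕ Fin n, u ≠ Sum.inl vm →
      Dtilde D ord u < dtilde (G := Kgraph m n) ord u) :
    ∀ i : Fin n,
      Dtilde D ord (Sum.inr i) + 1 -
        ((Finset.univ.filter fun j : Fin m =>
          (j : ℕ) < m - 1 ∧ Dtilde D ord (Sum.inl j) ≤ (i : ℤ) - 1).card : ℤ) ≤ 1 :=
  r_vector_le_one_general m n D ord vm hvm hfirst hordw hred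
end

section
/- Let m,n ≥ 2 and 0 < r < (m-1)(n-1) be integers and set g = (m-1)(n-1). For any (a,b,h) attaining δ_r(m,n) = an + bm - h with (a,b,h) ∈ I_r, one has a ≤ m-2 and b ≤ n-2; i.e. the minimizer never has a = m-1 or b = n-1. -/
lemma objective_eq_of_rel {m n r a b h : ℤ} (hrel : r = (a + 1) * (b + 1) - 1 - h) :
    a * n + b * m - h = (m - 1) * (n - 1) + r - (m - a - 1) * (n - b - 1) := by
  subst hrel
  ring

lemma delta_le_objective {m n r a b h : ℤ} (ha0 : 0 ≤ a) (ha1 : a ≤ m - 1)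
    (hb0 : 0 ≤ b) (hb1 : b ≤ n - 1) (hh : 0 ≤ h) (hrel : r = (a + 1) * (b + 1) - 1 - h) :
    delta m n r ≤ (m - 1) * (n - 1) + r - (m - a - 1) * (n - b - 1) := by
  have hbdd : BddBelow {d : ℤ | ∃ a b h : ℤ, 0 ≤ a ∧ a ≤ m - 1 ∧ 0 ≤ b ∧ b ≤ n - 1 ∧
      0 ≤ h ∧ r = (a + 1) * (b + 1) - 1 - h ∧ d = a * n + b * m - h} := by
    refine ⟨r, ?_⟩
    rintro d ⟨a, b, h, ha0, ha1, hb0, hb1, -, hrel, rfl⟩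
    have hprod : (m - a - 1) * (n - b - 1) ≤ (m - 1) * (n - 1) :=
      mul_le_mul (by linarith) (by linarith) (by linarith) (by linarith)
    rw [objective_eq_of_rel hrel]
    linarith
  rw [← objective_eq_of_rel hrel]
  exact csInf_le hbdd ⟨a, b, h, ha0, ha1, hb0, hb1, hh, hrel, rfl⟩

lemma delta_le_s18 (m n r : ℤ) (hm : 2 ≤ m) (hn : 2 ≤ n) (hr1 : r < (m - 1) * (n - 1)) :
    delta m n r ≤ (m - 1) * (n - 1) - 1 + r := by
  have := delta_le_objective (m := m) (n := n) (r := r) (a := m - 2) (b := n - 2)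
    (h := (m - 1) * (n - 1) - 1 - r) (by linarith) (by linarith) (by linarith) (by linarith)
    (by linarith) (by ring)
  linarith

theorem minimizer_bounds_general (m n r a b h : ℤ) (hm : 2 ≤ m) (hn : 2 ≤ n)
    (hr1 : r < (m - 1) * (n - 1))
    (ha1 : a ≤ m - 1) (hb1 : b ≤ n - 1)
    (hrel : r = (a + 1) * (b + 1) - 1 - h)
    (hmin : delta m n r = a * n + b * m - h) :
    a ≤ m - 2 ∧ b ≤ n - 2 := by
  have hprod : 0 < (m - a - 1) * (n - b - 1) := by
    have := delta_le_s18 m n r hm hn hr1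
    rw [hmin, objective_eq_of_rel hrel] at this
    linarith
  have ha := pos_of_mul_pos_left hprod (by linarith only [hb1])
  have hb := pos_of_mul_pos_right hprod (by linarith only [ha1])
  constructor <;> linarith

/-- Any `(a,b,h) ∈ I_r` attaining `δ_r(m,n) = an + bm - h` satisfies `a ≤ m-2` and `b ≤ n-2`:
the minimizer never has `a = m-1` or `b = n-1`. -/
theorem minimizer_bounds (m n r a b h : ℤ) (hm : 2 ≤ m) (hn : 2 ≤ n)
    (hr0 : 0 < r) (hr1 : r < (m - 1) * (n - 1))
    (ha0 : 0 ≤ a) (ha1 : a ≤ m - 1) (hb0 : 0 ≤ b) (hb1 : b ≤ n - 1) (hh : 0 ≤ h)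
    (hrel : r = (a + 1) * (b + 1) - 1 - h)
    (hmin : delta m n r = a * n + b * m - h) :
    a ≤ m - 2 ∧ b ≤ n - 2 :=
  minimizer_bounds_general m n r a b h hm hn hr1 ha1 hb1 hrel hmin
end
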